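/- arXiv:1601.02744 — 10 statements merged into one kernel-verified Lean document; each statement's English description precedes it below -/
import Mathlib

section
/- Let X be a Baire topological space. Then X satisfies property (II_{ℵ₀}) (i.e., every pointwise finite family of nonempty open subsets of X has at most countable index set) if and only if X has countable Suslin number (i.e., every family of nonempty pairwise disjoint open subsets of X is at most countable). -/
open Set

section aux
variable {X : Type u} [TopologicalSpace X] [BaireSpace X]

/-- Key claim: if `(A i)` is pointwise finite family of open sets in a Baire space,
then every nonempty open `U` contains a nonempty open `V` meeting only finitely many `A i`. -/
theorem key_claim {ι : Type v} (A : ι → Set X) (hopen : ∀ i, IsOpen (A i))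
    (hpf : ∀ x : X, {i | x ∈ A i}.Finite) {U : Set X} (hU : IsOpen U) (hUne : U.Nonempty) :
    ∃ V : Set X, IsOpen V ∧ V.Nonempty ∧ V ⊆ U ∧ {i | (A i ∩ V).Nonempty}.Finite := by
  classical
  set F : ℕ → Set X := fun n => {x | ((hpf x).toFinset).card ≤ n} with hF
  have hFclosed : ∀ n, IsClosed (F n) := by
    intro n
    rw [← isOpen_compl_iff]
    rw [isOpen_iff_forall_mem_open]
    intro x hx
    simp only [F, mem_compl_iff, mem_setOf_eq, not_le] at hx
    refine ⟨⋂ i ∈ (hpf x).toFinset, A i, ?_, ?_, ?_⟩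
    · intro y hy
      simp only [mem_iInter] at hy
      have hsub : (hpf x).toFinset ⊆ (hpf y).toFinset := by
        intro i hi
        simp only [Finite.mem_toFinset, mem_setOf_eq]
        exact hy i hi
      simp only [F, mem_compl_iff, mem_setOf_eq, not_le]
      exact lt_of_lt_of_le hx (Finset.card_le_card hsub)
    · exact isOpen_biInter_finset fun i _ => hopen i
    · simp only [mem_iInter]
      intro i hi
      simpa using ((hpf x).mem_toFinset).mp hi
  have hFcover : ⋃ n, F n = univ := by
    ext x
    simp only [mem_iUnion, mem_univ, iff_true]
    refine ⟨((hpf x).toFinset).card, ?_⟩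
    simp only [F, mem_setOf_eq]
    exact le_rfl
  have hdense : Dense (⋃ n, interior (F n)) := dense_iUnion_interior_of_closed hFclosed hFcover
  obtain ⟨x₀, hx₀U, hx₀⟩ := hdense.exists_mem_open hU hUne
  simp only [mem_iUnion] at hx₀U
  obtain ⟨n, hx₀n⟩ := hx₀U
  set U' : Set X := U ∩ interior (F n) with hU'
  have hU'open : IsOpen U' := hU.inter isOpen_interior
  have hU'ne : U'.Nonempty := ⟨x₀, hx₀, hx₀n⟩
  have hbd : ∀ y ∈ U', ((hpf y).toFinset).card ≤ n := by
    intro y hy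
    have h : y ∈ F n := interior_subset hy.2
    simpa only [F, mem_setOf_eq] using h
  -- pick a point of maximal multiplicity in U'
  set c : X → ℕ := fun y => ((hpf y).toFinset).card with hc
  have hne' : (c '' U').Nonempty := hU'ne.image c
  have hbdd : BddAbove (c '' U') := by
    refine ⟨n, ?_⟩
    rintro m ⟨y, hy, rfl⟩
    exact hbd y hy
  obtain ⟨x, hxU', hxc⟩ := Nat.sSup_mem hne' hbdd
  have hmax : ∀ y ∈ U', c y ≤ c x := by
    intro y hy
    rw [hxc]
    exact le_csSup hbdd ⟨y, hy, rfl⟩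
  set J := (hpf x).toFinset with hJ
  refine ⟨U' ∩ ⋂ i ∈ J, A i, ?_, ⟨x, hxU', ?_⟩, fun y hy => hy.1.1, ?_⟩
  · exact hU'open.inter (isOpen_biInter_finset fun i _ => hopen i)
  · simp only [mem_iInter]
    intro i hi
    simpa using (Finite.mem_toFinset _).mp hi
  · apply Set.Finite.subset J.finite_toSet
    rintro i ⟨y, hyA, hyU', hyJ⟩
    simp only [mem_iInter] at hyJ
    have hJsub : J ⊆ (hpf y).toFinset := by
      intro j hj
      simp only [Finite.mem_toFinset, mem_setOf_eq]
      exact hyJ j hj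
    have hcard : ((hpf y).toFinset).card ≤ J.card := hmax y hyU'
    have hEq : J = (hpf y).toFinset :=
      Finset.eq_of_subset_of_card_le hJsub hcard
    have : i ∈ (hpf y).toFinset := by
      simp only [Finite.mem_toFinset, mem_setOf_eq]
      exact hyA
    rw [← hEq] at this
    exact this

end aux

/-- For a Baire space `X`, property `(II_{ℵ₀})` (every pointwise finite
family of nonempty open subsets has at most countable index set) is equivalent to `X`
having countable Suslin number (every family of nonempty pairwise disjoint open sets
is at most countable). -/
theorem baire_propertyII_iff_countable_suslin {X : Type u} [TopologicalSpace X]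
    [BaireSpace X] :
    (∀ (ι : Type u) (A : ι → Set X), (∀ i, IsOpen (A i)) → (∀ i, (A i).Nonempty) →
      (∀ x : X, {i | x ∈ A i}.Finite) → Countable ι) ↔
    (∀ S : Set (Set X), (∀ U ∈ S, IsOpen U) → (∀ U ∈ S, U.Nonempty) →
      S.Pairwise Disjoint → S.Countable) := by
  constructor
  · intro h S hopen hne hdisj
    rw [← Set.countable_coe_iff]
    apply h ↥S (fun i => (i : Set X)) (fun i => hopen i i.2) (fun i => hne i i.2)
    intro x
    apply Set.Subsingleton.finite
    rintro i hi j hj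
    by_contra hij
    have : Disjoint (i : Set X) (j : Set X) :=
      hdisj i.2 j.2 (fun hc => hij (Subtype.ext hc))
    exact this.ne_of_mem hi hj rfl
  · intro hS ι A hopen hne hpf
    classical
    -- the collection of "good" open sets, meeting only finitely many A i
    set P : Set (Set X) := {V | IsOpen V ∧ V.Nonempty ∧ {i | (A i ∩ V).Nonempty}.Finite} with hP
    -- maximal pairwise disjoint subfamily of P
    obtain ⟨D, hD⟩ := zorn_subset {D : Set (Set X) | D ⊆ P ∧ D.Pairwise Disjoint} (by
      intro c hc hchain
      refine ⟨⋃₀ c, ⟨?_, ?_⟩, fun s hs => subset_sUnion_of_mem hs⟩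
      · rintro V ⟨D, hDc, hVD⟩
        exact (hc hDc).1 hVD
      · rintro V ⟨D₁, hD₁, hVD₁⟩ W ⟨D₂, hD₂, hWD₂⟩ hVW
        rcases hchain.total hD₁ hD₂ with h12 | h21
        · exact (hc hD₂).2 (h12 hVD₁) hWD₂ hVW
        · exact (hc hD₁).2 hVD₁ (h21 hWD₂) hVW)
    have hDP : D ⊆ P := hD.prop.1
    have hDdisj : D.Pairwise Disjoint := hD.prop.2
    have hDcount : D.Countable :=
      hS D (fun V hV => (hDP hV).1) (fun V hV => (hDP hV).2.1) hDdisj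
    -- every A i meets some element of D
    have hmeet : ∀ i, ∃ V ∈ D, (A i ∩ V).Nonempty := by
      intro i
      by_contra hcon
      push_neg at hcon
      obtain ⟨V', hV'open, hV'ne, hV'sub, hV'fin⟩ :=
        key_claim A hopen hpf (hopen i) (hne i)
      have hV'disj : ∀ W ∈ D, Disjoint V' W := by
        intro W hW
        rw [Set.disjoint_left]
        intro x hxV' hxW
        exact Set.Nonempty.ne_empty (⟨x, hV'sub hxV', hxW⟩ : (A i ∩ W).Nonempty) (hcon W hW)
      have hmem : insert V' D ∈ {D : Set (Set X) | D ⊆ P ∧ D.Pairwise Disjoint} := by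
        constructor
        · rintro W (rfl | hW)
          · exact ⟨hV'open, hV'ne, hV'fin⟩
          · exact hDP hW
        · apply Set.Pairwise.insert hDdisj
          intro W hW _
          exact ⟨hV'disj W hW, (hV'disj W hW).symm⟩
      have : V' ∈ D := hD.eq_of_subset hmem (subset_insert _ _) ▸ mem_insert V' D
      exact hV'ne.ne_empty (disjoint_self.mp (hV'disj V' this))
    -- countability
    have : (univ : Set ι).Countable := by
      have hsub : (univ : Set ι) ⊆ ⋃ V ∈ D, {i | (A i ∩ V).Nonempty} := by
        intro i _
        obtain ⟨V, hVD, hVi⟩ := hmeet i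
        exact mem_biUnion hVD hVi
      exact Set.Countable.mono hsub
        (Set.Countable.biUnion hDcount fun V hV => ((hDP hV).2.2).countable)
    exact Set.countable_univ_iff.mp this
end

section
/- Let X be a Baire topological space with countable Suslin number. Then every pointwise finite family (U_i : i ∈ I) of nonempty open subsets of X has an at most countable index set I. -/
/-- In a space with countable Suslin number, a family of open sets whose order on `t`
is bounded by `n` has countable `t`. -/
theorem bounded_order_countable_aux {X : Type u} [TopologicalSpace X]
    (hSuslin : ∀ S : Set (Set X), (∀ U ∈ S, IsOpen U) → (∀ U ∈ S, U.Nonempty) →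
      S.Pairwise Disjoint → S.Countable)
    {ι : Type u} (U : ι → Set X) (hopen : ∀ i, IsOpen (U i)) :
    ∀ n : ℕ, ∀ t : Set ι, (∀ i ∈ t, (U i).Nonempty) →
      (∀ (x : X) (s : Finset ι), ↑s ⊆ t → (∀ i ∈ s, x ∈ U i) → s.card ≤ n) →
      t.Countable := by
  classical
  intro n
  induction n with
  | zero =>
    intro t hne ht
    convert Set.countable_empty
    ext i
    simp only [Set.mem_empty_iff_false, iff_false]
    intro hi
    obtain ⟨x, hx⟩ := hne i hi
    have := ht x {i} (by simpa) (by simpa)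
    simp at this
  | succ n ih =>
    intro t hne ht
    set Fs : Set (Finset ι) := {F | ↑F ⊆ t ∧ F.card = n + 1 ∧ (⋂ i ∈ F, U i).Nonempty}
      with hFs_def
    -- two distinct members of Fs have disjoint intersections
    have key : ∀ F ∈ Fs, ∀ G ∈ Fs, F ≠ G → ∀ x : X,
        x ∈ (⋂ i ∈ F, U i) → x ∈ (⋂ i ∈ G, U i) → False := by
      intro F hF G hG hFG x hxF hxG
      have hsub : ↑(F ∪ G) ⊆ t := by
        push_cast
        exact Set.union_subset hF.1 hG.1
      have hmem : ∀ i ∈ F ∪ G, x ∈ U i := by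
        intro i hi
        rcases Finset.mem_union.1 hi with h | h
        · exact Set.mem_iInter₂.1 hxF i h
        · exact Set.mem_iInter₂.1 hxG i h
      have hcard := ht x (F ∪ G) hsub hmem
      have h1 : F.card = n + 1 := hF.2.1
      have h2 : G.card = n + 1 := hG.2.1
      have hEq : F = F ∪ G :=
        Finset.eq_of_subset_of_card_le Finset.subset_union_left (by omega)
      have hGF : G ⊆ F := hEq ▸ Finset.subset_union_right
      exact hFG (Finset.eq_of_subset_of_card_le hGF (by omega)).symm
    have hinj : Set.InjOn (fun F => ⋂ i ∈ F, U i) Fs := by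
      intro F hF G hG hEq
      by_contra hFG
      obtain ⟨x, hx⟩ := hF.2.2
      have hEq' : (⋂ i ∈ F, U i) = ⋂ i ∈ G, U i := hEq
      exact key F hF G hG hFG x hx (hEq' ▸ hx)
    have himg : ((fun F => ⋂ i ∈ F, U i) '' Fs).Countable := by
      apply hSuslin
      · rintro V ⟨F, hF, rfl⟩
        exact isOpen_biInter_finset fun i _ => hopen i
      · rintro V ⟨F, hF, rfl⟩
        exact hF.2.2
      · rintro V ⟨F, hF, rfl⟩ W ⟨G, hG, rfl⟩ hVW
        have hFG : F ≠ G := fun h => hVW (by rw [h])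
        rw [Set.disjoint_left]
        intro x hxF hxG
        exact key F hF G hG hFG x hxF hxG
    have hFs : Fs.Countable :=
      Set.countable_of_injective_of_countable_image hinj himg
    set J : Set ι := ⋃ F ∈ Fs, (↑F : Set ι) with hJ_def
    have hJ : J.Countable := hFs.biUnion fun F _ => F.finite_toSet.countable
    have htJ : (t \ J).Countable := by
      apply ih (t \ J) (fun i hi => hne i hi.1)
      intro x s hs hx
      by_contra hlt
      push_neg at hlt
      obtain ⟨s', hs's, hcard'⟩ := s.exists_subset_card_eq (show n + 1 ≤ s.card from hlt)
      have hs'Fs : s' ∈ Fs := by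
        refine ⟨(Finset.coe_subset.2 hs's).trans (hs.trans Set.diff_subset), hcard', ?_⟩
        exact ⟨x, Set.mem_biInter fun i hi => hx i (hs's hi)⟩
      obtain ⟨i, hi⟩ := Finset.card_pos.1 (by omega : 0 < s'.card)
      have hiJ : i ∈ J := Set.mem_biUnion hs'Fs (Finset.mem_coe.2 hi)
      exact (hs (Finset.mem_coe.2 (hs's hi))).2 hiJ
    have : t ⊆ (t \ J) ∪ J := fun i hi => by
      by_cases h : i ∈ J
      · exact Or.inr h
      · exact Or.inl ⟨hi, h⟩
    exact (htJ.union hJ).mono this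


/-- A Baire space with countable Suslin number satisfies `(II_{ℵ₀})`:
every pointwise finite family of nonempty open subsets has at most countable index set. -/
theorem baire_countable_suslin_pointwise_finite_countable {X : Type u} [TopologicalSpace X]
    [BaireSpace X]
    (hSuslin : ∀ S : Set (Set X), (∀ U ∈ S, IsOpen U) → (∀ U ∈ S, U.Nonempty) →
      S.Pairwise Disjoint → S.Countable)
    (ι : Type u) (U : ι → Set X) (hopen : ∀ i, IsOpen (U i))
    (hne : ∀ i, (U i).Nonempty) (hpf : ∀ x : X, {i | x ∈ U i}.Finite) :
    Countable ι := by
  -- F n : points belonging to at most n of the U i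
  set F : ℕ → Set X := fun n => {x | ∀ s : Finset ι, (∀ i ∈ s, x ∈ U i) → s.card ≤ n}
    with hF_def
  have hFclosed : ∀ n, IsClosed (F n) := by
    intro n
    rw [← isOpen_compl_iff, isOpen_iff_mem_nhds]
    intro x hx
    simp only [Set.mem_compl_iff, hF_def, Set.mem_setOf_eq, not_forall] at hx
    obtain ⟨s, hxs, hcard⟩ := hx
    have hV : IsOpen (⋂ i ∈ s, U i) := isOpen_biInter_finset fun i _ => hopen i
    have hxV : x ∈ ⋂ i ∈ s, U i := Set.mem_biInter hxs
    filter_upwards [hV.mem_nhds hxV] with y hy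
    simp only [Set.mem_compl_iff, hF_def, Set.mem_setOf_eq, not_forall]
    exact ⟨s, fun i hi => Set.mem_iInter₂.1 hy i hi, hcard⟩
  have hFcover : ⋃ n, F n = Set.univ := by
    ext x
    simp only [Set.mem_iUnion, Set.mem_univ, iff_true]
    refine ⟨(hpf x).toFinset.card, fun s hs => ?_⟩
    exact Finset.card_le_card fun i hi => (hpf x).mem_toFinset.2 (hs i hi)
  have hdense : Dense (⋃ n, interior (F n)) :=
    dense_iUnion_interior_of_closed hFclosed hFcover
  -- each index set t n is countable
  set t : ℕ → Set ι := fun n => {i | (U i ∩ interior (F n)).Nonempty} with ht_def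
  have htc : ∀ n, (t n).Countable := by
    intro n
    apply bounded_order_countable_aux hSuslin (fun i => U i ∩ interior (F n))
      (fun i => (hopen i).inter isOpen_interior) n (t n) (fun i hi => hi)
    intro x s hs hx
    rcases s.eq_empty_or_nonempty with rfl | ⟨i0, hi0⟩
    · simp
    · have hxF : x ∈ F n := interior_subset (hx i0 hi0).2
      exact hxF s fun i hi => (hx i hi).1
  have huniv : (Set.univ : Set ι).Countable := by
    have hsub : (Set.univ : Set ι) ⊆ ⋃ n, t n := by
      intro i _
      obtain ⟨x, hx⟩ := hdense.inter_open_nonempty (U i) (hopen i) (hne i)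
      obtain ⟨n, hn⟩ := Set.mem_iUnion.1 hx.2
      exact Set.mem_iUnion.2 ⟨n, ⟨x, hx.1, hn⟩⟩
    exact ((Set.countable_iUnion htc).mono hsub)
  exact Set.countable_univ_iff.mp huniv
end

section
/- Let X, Y be topological spaces, φ : Y → Y₀ a perfect surjection onto a topological space Y₀, and let f₀ : X × Y₀ → ℝ and f : X × Y → ℝ be functions such that f(x,y) = f₀(x, φ(y)) for every x ∈ X and y ∈ Y. Then the set of discontinuity points of f₀ equals D = {(x, φ(y)) : (x,y) ∈ D(f)}, where D(f) is the set of discontinuity points of f. -/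
open Topology Filter Set


/-- If `φ : Y → Y₀` is a perfect surjection (continuous, closed, with
compact fibers) and `f (x, y) = f₀ (x, φ y)`, then the discontinuity set of `f₀`
equals `{(x, φ y) : (x, y) ∈ D(f)}`. -/
theorem discontinuity_set_of_perfect_quotient {X Y Y₀ : Type*} [TopologicalSpace X]
    [TopologicalSpace Y] [TopologicalSpace Y₀] (φ : Y → Y₀)
    (hφc : Continuous φ) (hφcl : IsClosedMap φ)
    (hφfib : ∀ y₀ : Y₀, IsCompact (φ ⁻¹' {y₀})) (hφsurj : Function.Surjective φ)
    (f₀ : X × Y₀ → ℝ) (f : X × Y → ℝ) (hf : ∀ x y, f (x, y) = f₀ (x, φ y)) :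
    {p : X × Y₀ | ¬ ContinuousAt f₀ p} =
      {q : X × Y₀ | ∃ p : X × Y, ¬ ContinuousAt f p ∧ q = (p.1, φ p.2)} := by
  have hg : Continuous (fun p : X × Y => (p.1, φ p.2)) :=
    continuous_fst.prodMk (hφc.comp continuous_snd)
  have hfeq : f = f₀ ∘ (fun p : X × Y => (p.1, φ p.2)) := by
    funext p; exact hf p.1 p.2
  ext ⟨x, y₀⟩
  simp only [Set.mem_setOf_eq]
  constructor
  · intro hd
    by_contra hc
    push_neg at hc
    apply hd
    have hcont : ∀ y, φ y = y₀ → ContinuousAt f (x, y) := by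
      intro y hy
      by_contra h
      exact hc (x, y) h (by simp [hy])
    -- show ContinuousAt f₀ (x, y₀)
    rw [ContinuousAt, Metric.tendsto_nhds]
    intro ε hε
    set S : Set (X × Y) := {z | dist (f z) (f₀ (x, y₀)) < ε} with hS
    have hmem : ∀ y, φ y = y₀ → S ∈ 𝓝 (x, y) := by
      intro y hy
      have h := hcont y hy
      rw [ContinuousAt, Metric.tendsto_nhds] at h
      have := h ε hε
      simp [hf x y, hy] at this
      exact this
    have hsub : ({x} : Set X) ×ˢ (φ ⁻¹' {y₀}) ⊆ interior S := by
      rintro ⟨x', y⟩ ⟨hx', hy⟩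
      simp only [Set.mem_singleton_iff] at hx'
      subst hx'
      exact mem_interior_iff_mem_nhds.2 (hmem y hy)
    obtain ⟨u, v, hu, hv, hxu, hKv, huv⟩ :=
      generalized_tube_lemma isCompact_singleton (hφfib y₀) isOpen_interior hsub
    -- shrink: find open W ∋ y₀ with φ ⁻¹' W ⊆ v
    set W : Set Y₀ := (φ '' vᶜ)ᶜ with hW
    have hWopen : IsOpen W := (hφcl _ hv.isClosed_compl).isOpen_compl
    have hy₀W : y₀ ∈ W := by
      rintro ⟨y, hyv, hyy₀⟩
      exact hyv (hKv hyy₀)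
    have hWsub : φ ⁻¹' W ⊆ v := by
      intro y hy
      by_contra h
      exact hy ⟨y, h, rfl⟩
    have hxmem : x ∈ u := hxu rfl
    filter_upwards [prod_mem_nhds (hu.mem_nhds hxmem) (hWopen.mem_nhds hy₀W)]
    rintro ⟨x', y₀'⟩ ⟨hx'u, hy₀'W⟩
    obtain ⟨y', hy'⟩ := hφsurj y₀'
    have hyv : y' ∈ v := hWsub (by simp [hy', hy₀'W])
    have : (x', y') ∈ interior S := huv ⟨hx'u, hyv⟩
    have hdist : (x', y') ∈ S := interior_subset this
    rw [hS] at hdist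
    simp only [Set.mem_setOf_eq] at hdist
    rwa [hf x' y', hy'] at hdist
  · rintro ⟨⟨x', y⟩, hp, heq⟩
    obtain ⟨hx, hy⟩ := Prod.mk.injEq .. ▸ heq
    intro hc
    apply hp
    have : ContinuousAt (f₀ ∘ (fun p : X × Y => (p.1, φ p.2))) (x', y) := by
      apply ContinuousAt.comp _ hg.continuousAt
      rw [hx, hy] at hc
      exact hc
    rwa [← hfeq] at this
end

section
/- Let X be a separable topological space, T a set, and Y ⊆ ℝ^T a Lindelöf subspace (with the topology of pointwise convergence). Then every separately continuous function f : X × Y → ℝ depends on at most countably many coordinates with respect to the second variable; that is, there exists a set S ⊆ T with |S| ≤ ℵ₀ such that f(x, y′) = f(x, y″) for every x ∈ X and all y′, y″ ∈ Y with y′|_S = y″|_S. -/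
theorem contDependsCountably {T : Type*} (Y : Set (T → ℝ)) [LindelofSpace Y]
    (g : Y → ℝ) (hg : Continuous g) :
    ∃ S : Set T, S.Countable ∧ ∀ y' y'' : Y,
      (∀ t ∈ S, (y' : T → ℝ) t = (y'' : T → ℝ) t) → g y' = g y'' := by
  -- for each n and y, get a finite set of coordinates and a cylinder
  have main : ∀ (n : ℕ) (y : Y), ∃ (I : Finset T) (u : T → Set ℝ),
      (∀ a ∈ I, IsOpen (u a)) ∧ (∀ a ∈ I, (y : T → ℝ) a ∈ u a) ∧
      ∀ z : Y, (∀ a ∈ I, (z : T → ℝ) a ∈ u a) → dist (g z) (g y) < 1 / (n + 1) := by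
    intro n y
    have hb : Metric.ball (g y) (1 / (n + 1)) ∈ nhds (g y) :=
      Metric.ball_mem_nhds _ (by positivity)
    have hmem : g ⁻¹' Metric.ball (g y) (1 / (n + 1)) ∈ nhds y :=
      hg.continuousAt.preimage_mem_nhds hb
    obtain ⟨W, hW, hsub⟩ := (mem_nhds_subtype Y y _).mp hmem
    obtain ⟨V, hVW, hVopen, hyV⟩ := mem_nhds_iff.mp hW
    obtain ⟨I, u, h1, h2⟩ := isOpen_pi_iff.mp hVopen _ hyV
    refine ⟨I, u, fun a ha => (h1 a ha).1, fun a ha => (h1 a ha).2, fun z hz => ?_⟩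
    have : (z : T → ℝ) ∈ V := h2 (by simpa [Set.mem_pi] using hz)
    exact hsub (hVW this)
  choose I u huopen humem hdist using main
  -- cover Y and extract countable subcovers
  have cover : ∀ n : ℕ, ∃ r : Set Y, r.Countable ∧
      (Set.univ : Set Y) ⊆ ⋃ y ∈ r, ((↑) : Y → T → ℝ) ⁻¹' ((I n y : Set T).pi (u n y)) := by
    intro n
    apply isLindelof_univ.elim_countable_subcover
    · intro y
      exact (isOpen_set_pi (I n y).finite_toSet (fun a ha => huopen n y a ha)).preimage
        continuous_subtype_val
    · intro y _
      exact Set.mem_iUnion.mpr ⟨y, fun a ha => humem n y a ha⟩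
  choose r hrc hrcov using cover
  refine ⟨⋃ n, ⋃ y ∈ r n, (I n y : Set T), ?_, ?_⟩
  · exact Set.countable_iUnion fun n =>
      (hrc n).biUnion fun y _ => (I n y).countable_toSet
  · intro y' y'' hagree
    refine eq_of_forall_dist_le fun ε hε => le_of_lt ?_
    obtain ⟨n, hn⟩ := exists_nat_one_div_lt (half_pos hε)
    have hy' := hrcov n (Set.mem_univ y')
    obtain ⟨y, hyr, hy'mem⟩ := Set.mem_iUnion₂.mp hy'
    have hsubS : (I n y : Set T) ⊆ ⋃ m, ⋃ z ∈ r m, ((I m z : Set T)) := fun a ha =>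
      Set.mem_iUnion.mpr ⟨n, Set.mem_iUnion.mpr ⟨y, Set.mem_iUnion.mpr ⟨hyr, ha⟩⟩⟩
    have hy'mem' : ∀ a ∈ I n y, (y' : T → ℝ) a ∈ u n y a := by
      simpa [Set.mem_pi] using hy'mem
    have hy''mem : ∀ a ∈ I n y, (y'' : T → ℝ) a ∈ u n y a := fun a ha => by
      rw [← hagree a (hsubS ha)]; exact hy'mem' a ha
    have d1 := hdist n y y' hy'mem'
    have d2 := hdist n y y'' hy''mem
    calc dist (g y') (g y'') ≤ dist (g y') (g y) + dist (g y) (g y'') :=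
          dist_triangle _ _ _
      _ < 1 / (n + 1) + 1 / (n + 1) := by rw [dist_comm (g y)]; linarith
      _ < ε := by linarith

/-- A function of two variables is separately continuous if all its sections in each
variable are continuous. -/
def SeparatelyContinuous {X Y : Type*} [TopologicalSpace X] [TopologicalSpace Y]
    (f : X × Y → ℝ) : Prop :=
  (∀ x, Continuous fun y => f (x, y)) ∧ (∀ y, Continuous fun x => f (x, y))

/-- if `X` is separable and `Y ⊆ ℝ^T` is Lindelöf (with the pointwise
convergence topology), then every separately continuous `f : X × Y → ℝ` depends on at
most countably many coordinates with respect to the second variable. -/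
theorem sepCont_depends_on_countably_many_coordinates_of_separable_lindelof
    {X : Type*} [TopologicalSpace X] [TopologicalSpace.SeparableSpace X]
    {T : Type*} (Y : Set (T → ℝ)) [LindelofSpace Y]
    (f : X × Y → ℝ) (hf : SeparatelyContinuous f) :
    ∃ S : Set T, S.Countable ∧ ∀ (x : X) (y' y'' : Y),
      (∀ t ∈ S, (y' : T → ℝ) t = (y'' : T → ℝ) t) → f (x, y') = f (x, y'') := by
  obtain ⟨D, hDc, hDd⟩ := TopologicalSpace.exists_countable_dense X
  have key : ∀ x : X, ∃ S : Set T, S.Countable ∧ ∀ y' y'' : Y,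
      (∀ t ∈ S, (y' : T → ℝ) t = (y'' : T → ℝ) t) → f (x, y') = f (x, y'') :=
    fun x => contDependsCountably Y (fun y => f (x, y)) (hf.1 x)
  choose S hSc hS using key
  refine ⟨⋃ x ∈ D, S x, hDc.biUnion fun x _ => hSc x, ?_⟩
  intro x y' y'' hagree
  have heq : (fun x => f (x, y')) = fun x => f (x, y'') := by
    refine Continuous.ext_on hDd (hf.2 y') (hf.2 y'') fun z hz => ?_
    exact hS z y' y'' fun t ht => hagree t (Set.mem_biUnion hz ht)
  exact congrFun heq x
end

section
/- Let X be a topological space with property (II_{ℵ₀}), T a set, and Y ⊆ ℝ^T a compact subspace such that Y is the closure of the set B = {y ∈ Y : |supp y| ≤ ℵ₀} of points with at most countable support. Then every separately continuous function f : X × Y → ℝ depends on at most countably many coordinates with respect to the second variable; that is, there exists a set S ⊆ T with |S| ≤ ℵ₀ such that f(x, y′) = f(x, y″) for every x ∈ X and all y′, y″ ∈ Y with y′|_S = y″|_S. -/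
/-- Property `(II_{ℵ₀})`: every pointwise finite family of nonempty open subsets
has at most countable index set. -/
def PropertyIIAlephZero (X : Type u) [TopologicalSpace X] : Prop :=
  ∀ (ι : Type u) (A : ι → Set X), (∀ i, IsOpen (A i)) → (∀ i, (A i).Nonempty) →
    (∀ x : X, {i | x ∈ A i}.Finite) → Countable ι


open Set

open scoped Classical


/-- Stone–Weierstrass: a continuous function on a compact subset of `ℝ^T` is,
up to `ε`, determined by finitely many coordinates. -/
lemma sw_lemma {T : Type*} {Y : Set (T → ℝ)} (hYcomp : IsCompact Y) (g : C(↥Y, ℝ))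
    {ε : ℝ} (hε : 0 < ε) :
    ∃ F : Finset T, ∀ y₁ y₂ : ↥Y, (∀ t ∈ F, (y₁ : T → ℝ) t = (y₂ : T → ℝ) t) →
      |g y₁ - g y₂| ≤ ε := by
  haveI : CompactSpace ↥Y := isCompact_iff_compactSpace.mp hYcomp
  set coord : T → C(↥Y, ℝ) := fun t =>
    ⟨fun y => (y : T → ℝ) t, (continuous_apply t).comp continuous_subtype_val⟩ with hcoord
  set A : Subalgebra ℝ C(↥Y, ℝ) := Algebra.adjoin ℝ (Set.range coord) with hA
  have hsep : A.SeparatesPoints := by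
    intro y₁ y₂ hne
    have : ∃ t, (y₁ : T → ℝ) t ≠ (y₂ : T → ℝ) t := by
      by_contra h
      push_neg at h
      exact hne (Subtype.ext (funext h))
    obtain ⟨t, ht⟩ := this
    exact ⟨coord t, ⟨coord t, Algebra.subset_adjoin (Set.mem_range_self t), rfl⟩, ht⟩
  have htop := ContinuousMap.subalgebra_topologicalClosure_eq_top_of_separatesPoints A hsep
  have hgmem : g ∈ closure (A : Set C(↥Y, ℝ)) := by
    rw [← Subalgebra.topologicalClosure_coe, htop]
    exact Set.mem_univ g
  obtain ⟨p, hpA, hpd⟩ := Metric.mem_closure_iff.mp hgmem (ε / 2) (by positivity)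
  -- `p` is exactly determined by finitely many coordinates
  have hp : ∀ p' ∈ A, ∃ F : Finset T, ∀ y₁ y₂ : ↥Y,
      (∀ t ∈ F, (y₁ : T → ℝ) t = (y₂ : T → ℝ) t) → p' y₁ = p' y₂ := by
    intro p' hp'A
    induction hp'A using Algebra.adjoin_induction with
    | mem q hq =>
      obtain ⟨t, rfl⟩ := hq
      exact ⟨{t}, fun y₁ y₂ h => h t (Finset.mem_singleton_self t)⟩
    | algebraMap r => exact ⟨∅, fun y₁ y₂ _ => by simp⟩
    | add q r _ _ hq hr =>
      obtain ⟨F₁, h₁⟩ := hq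
      obtain ⟨F₂, h₂⟩ := hr
      refine ⟨F₁ ∪ F₂, fun y₁ y₂ h => ?_⟩
      have e₁ := h₁ y₁ y₂ fun t ht => h t (Finset.mem_union_left _ ht)
      have e₂ := h₂ y₁ y₂ fun t ht => h t (Finset.mem_union_right _ ht)
      simp [ContinuousMap.add_apply, e₁, e₂]
    | mul q r _ _ hq hr =>
      obtain ⟨F₁, h₁⟩ := hq
      obtain ⟨F₂, h₂⟩ := hr
      refine ⟨F₁ ∪ F₂, fun y₁ y₂ h => ?_⟩
      have e₁ := h₁ y₁ y₂ fun t ht => h t (Finset.mem_union_left _ ht)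
      have e₂ := h₂ y₁ y₂ fun t ht => h t (Finset.mem_union_right _ ht)
      simp [ContinuousMap.mul_apply, e₁, e₂]
  obtain ⟨F, hF⟩ := hp p hpA
  refine ⟨F, fun y₁ y₂ h => ?_⟩
  have h1 : dist (g y₁) (p y₁) ≤ dist g p := ContinuousMap.dist_apply_le_dist y₁
  have h2 : dist (g y₂) (p y₂) ≤ dist g p := ContinuousMap.dist_apply_le_dist y₂
  have hpe : p y₁ = p y₂ := hF y₁ y₂ h
  have : |g y₁ - g y₂| ≤ dist (g y₁) (p y₁) + dist (g y₂) (p y₂) := by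
    rw [Real.dist_eq, Real.dist_eq, hpe]
    have := abs_sub (g y₁) (g y₂)
    calc |g y₁ - g y₂| = |(g y₁ - p y₂) - (g y₂ - p y₂)| := by ring_nf
    _ ≤ |g y₁ - p y₂| + |g y₂ - p y₂| := abs_sub _ _
  linarith [hpd, h1, h2, this]

section Retr
variable {T : Type*}

/-- open rational box prescribing finitely many coordinates -/
def boxSet (F : Finset T) (g : T → ℚ) (m : ℕ) : Set (T → ℝ) :=
  {z | ∀ t ∈ F, |z t - (g t : ℝ)| < 1 / (m + 1)}

lemma boxSet_isOpen (F : Finset T) (g : T → ℚ) (m : ℕ) : IsOpen (boxSet F g m) := by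
  have : boxSet F g m = ⋂ t ∈ F, (fun z : T → ℝ => z t) ⁻¹' Metric.ball ((g t : ℝ)) (1 / (m + 1)) := by
    ext z
    simp [boxSet, Metric.mem_ball, Real.dist_eq]
  rw [this]
  exact isOpen_biInter_finset fun t _ => (Metric.isOpen_ball).preimage (continuous_apply t)

/-- a chosen point of `B` in a given box (junk value if there is none) -/
noncomputable def wit (B : Set (T → ℝ)) (F : Finset T) (g : T → ℚ) (m : ℕ) : T → ℝ :=
  if h : (B ∩ boxSet F g m).Nonempty then h.choose else fun _ => 0

lemma wit_mem {B : Set (T → ℝ)} {F : Finset T} {g : T → ℚ} {m : ℕ}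
    (h : (B ∩ boxSet F g m).Nonempty) : wit B F g m ∈ B ∩ boxSet F g m := by
  rw [wit, dif_pos h]; exact h.choose_spec

/-- extend a rational function on a finset by zero -/
noncomputable def extendQ (F : Finset T) (g : {t // t ∈ F} → ℚ) : T → ℚ :=
  fun t => if h : t ∈ F then g ⟨t, h⟩ else 0

/-- one closing-off step -/
noncomputable def stepS (B : Set (T → ℝ)) (S' : Set T) : Set T :=
  S' ∪ ⋃ (F : {F : Finset T // ↑F ⊆ S'}) (g : {t // t ∈ F.1} → ℚ) (m : ℕ),
      {t | wit B F.1 (extendQ F.1 g) m t ≠ 0}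

lemma subset_stepS (B : Set (T → ℝ)) (S' : Set T) : S' ⊆ stepS B S' :=
  subset_union_left

lemma stepS_countable {B : Set (T → ℝ)} (hB : ∀ b ∈ B, {t | b t ≠ 0}.Countable)
    {S' : Set T} (hS' : S'.Countable) : (stepS B S').Countable := by
  refine hS'.union ?_
  have hcF : Countable {F : Finset T // ↑F ⊆ S'} := by
    have h1 : {F : Finset T | ↑F ⊆ S'}.Countable := by
      have : {F : Finset T | ↑F ⊆ S'} ⊆
          (fun F : Finset T => (F : Set T)) ⁻¹' {s : Set T | s.Finite ∧ s ⊆ S'} := by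
        intro F hF
        exact ⟨F.finite_toSet, hF⟩
      exact ((Set.countable_setOf_finite_subset hS').preimage Finset.coe_injective).mono this
    exact h1.to_subtype
  refine Set.countable_iUnion fun F => Set.countable_iUnion fun g => Set.countable_iUnion fun m => ?_
  by_cases h : (B ∩ boxSet F.1 (extendQ F.1 g) m).Nonempty
  · exact hB _ (wit_mem h).1
  · have : wit B F.1 (extendQ F.1 g) m = fun _ => 0 := by rw [wit, dif_neg h]
    simp [this]

/-- the iterated closing-off sets -/
noncomputable def SnS (B : Set (T → ℝ)) (S₀ : Set T) : ℕ → Set T :=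
  fun k => (stepS B)^[k] S₀

lemma SnS_mono (B : Set (T → ℝ)) (S₀ : Set T) : Monotone (SnS B S₀) := by
  refine monotone_nat_of_le_succ fun k => ?_
  rw [SnS, SnS, Function.iterate_succ_apply']
  exact subset_stepS _ _

lemma finset_subset_of_mono {s : ℕ → Set T} (hmono : Monotone s) (F : Finset T)
    (h : ∀ t ∈ F, ∃ k, t ∈ s k) : ∃ k, ∀ t ∈ F, t ∈ s k := by
  classical
  induction F using Finset.induction_on with
  | empty => exact ⟨0, by simp⟩
  | insert _ _ hx ih =>
    rename_i a G
    obtain ⟨k₁, hk₁⟩ := ih fun t ht => h t (Finset.mem_insert_of_mem ht)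
    obtain ⟨k₂, hk₂⟩ := h a (Finset.mem_insert_self _ _)
    refine ⟨max k₁ k₂, fun t ht => ?_⟩
    rcases Finset.mem_insert.mp ht with rfl | ht
    · exact hmono (le_max_right _ _) hk₂
    · exact hmono (le_max_left _ _) (hk₁ t ht)

/-- The Valdivia-type retraction lemma: every countable set of coordinates is contained
in a countable set `S` such that truncation to `S` maps `Y` into `Y`. -/
lemma exists_retr {Y : Set (T → ℝ)}
    (hYB : Y = closure {y | y ∈ Y ∧ {t | y t ≠ 0}.Countable})
    {S₀ : Set T} (hS₀ : S₀.Countable) :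
    ∃ S : Set T, S.Countable ∧ S₀ ⊆ S ∧ ∀ y ∈ Y, S.indicator y ∈ Y := by
  set B := {y | y ∈ Y ∧ {t | y t ≠ 0}.Countable} with hBdef
  have hB : ∀ b ∈ B, {t | b t ≠ 0}.Countable := fun b hb => hb.2
  refine ⟨⋃ k, SnS B S₀ k, ?_, ?_, ?_⟩
  · refine Set.countable_iUnion fun k => ?_
    induction k with
    | zero => exact hS₀
    | succ k ih =>
      rw [SnS, Function.iterate_succ_apply']
      exact stepS_countable hB ih
  · exact subset_iUnion_of_subset 0 (by rw [SnS]; simp)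
  · intro y hy
    set S : Set T := ⋃ k, SnS B S₀ k with hSdef
    -- show S.indicator y ∈ closure B = Y
    rw [hYB]
    rw [mem_closure_iff]
    intro o ho hpo
    obtain ⟨I, u, hu, hsub⟩ := isOpen_pi_iff.mp ho _ hpo
    -- find a uniform radius η
    have hball : ∀ a ∈ I, ∃ η > (0:ℝ), Metric.ball (S.indicator y a) η ⊆ u a := by
      intro a ha
      exact Metric.isOpen_iff.mp (hu a ha).1 _ (hu a ha).2
    have hex : ∃ η > (0:ℝ), ∀ a ∈ I, Metric.ball (S.indicator y a) η ⊆ u a := by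
      choose! ηf hηf hsubf using hball
      rcases I.eq_empty_or_nonempty with rfl | hne
      · exact ⟨1, one_pos, by simp⟩
      · refine ⟨I.inf' hne ηf, ?_, ?_⟩
        · rcases Finset.exists_mem_eq_inf' hne ηf with ⟨a, ha, hEq⟩
          rw [hEq]; exact hηf a ha
        · intro a ha
          refine subset_trans (Metric.ball_subset_ball ?_) (hsubf a ha)
          exact Finset.inf'_le _ ha
    obtain ⟨η, hη, hballs⟩ := hex
    -- the part of I inside S
    set F' : Finset T := I.filter (· ∈ S) with hF'
    have hF'S : ∀ t ∈ F', t ∈ S := fun t ht => (Finset.mem_filter.mp ht).2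
    obtain ⟨k, hk⟩ := finset_subset_of_mono (SnS_mono B S₀) F' fun t ht =>
      mem_iUnion.mp (hF'S t ht)
    -- pick precision
    obtain ⟨m, hm⟩ := exists_nat_one_div_lt (show (0:ℝ) < η / 2 by linarith)
    -- pick rational approximations of y on F'
    have hrat : ∀ t : {t // t ∈ F'}, ∃ q : ℚ, |y t.1 - (q:ℝ)| < 1 / (m + 1) := by
      intro t
      exact exists_rat_near (y t.1) (by positivity)
    choose g₀ hg₀ using hrat
    set gg := extendQ F' g₀ with hgg
    have hybox : y ∈ boxSet F' gg m := by
      intro t ht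
      have : gg t = g₀ ⟨t, ht⟩ := by rw [hgg, extendQ, dif_pos ht]
      rw [this]
      exact hg₀ ⟨t, ht⟩
    -- the box meets B
    have hne : (B ∩ boxSet F' gg m).Nonempty := by
      have := mem_closure_iff.mp (hYB ▸ hy) _ (boxSet_isOpen F' gg m) hybox
      exact this.imp fun b hb => ⟨hb.2, hb.1⟩
    set b := wit B F' gg m with hb
    have hbB : b ∈ B := (wit_mem hne).1
    have hbbox : b ∈ boxSet F' gg m := (wit_mem hne).2
    -- support of b is inside S
    have hsupp : {t | b t ≠ 0} ⊆ S := by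
      have h1 : {t | b t ≠ 0} ⊆ stepS B (SnS B S₀ k) := by
        intro t ht
        refine Set.mem_union_right _ ?_
        exact mem_iUnion.mpr ⟨⟨F', fun x hx => hk x hx⟩,
          mem_iUnion.mpr ⟨g₀, mem_iUnion.mpr ⟨m, ht⟩⟩⟩
      have h2 : stepS B (SnS B S₀ k) = SnS B S₀ (k + 1) := by
        rw [SnS, SnS, Function.iterate_succ_apply']
      exact h1.trans (h2 ▸ subset_iUnion (SnS B S₀) (k + 1))
    refine ⟨b, hsub ?_, hbB⟩
    intro a ha
    by_cases haS : a ∈ S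
    · have haF' : a ∈ F' := Finset.mem_filter.mpr ⟨ha, haS⟩
      have h1 : |b a - (gg a : ℝ)| < 1 / (m + 1) := hbbox a haF'
      have h2 : |y a - (gg a : ℝ)| < 1 / (m + 1) := hybox a haF'
      have h3 : S.indicator y a = y a := Set.indicator_of_mem haS y
      refine hballs a ha ?_
      rw [Metric.mem_ball, Real.dist_eq, h3]
      calc |b a - y a| = |(b a - gg a) - (y a - gg a)| := by ring_nf
        _ ≤ |b a - (gg a:ℝ)| + |y a - (gg a:ℝ)| := abs_sub _ _
        _ < 1 / (m+1) + 1 / (m+1) := by linarith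
        _ < η := by linarith
    · have h3 : S.indicator y a = 0 := Set.indicator_of_notMem haS y
      have hba : b a = 0 := by
        by_contra hba
        exact haS (hsupp hba)
      have : b a = S.indicator y a := by rw [hba, h3]
      rw [this]
      exact (hu a ha).2

end Retr

lemma key_eps {X : Type u} [TopologicalSpace X] (hX : PropertyIIAlephZero X)
    {T : Type*} (Y : Set (T → ℝ)) (hYcomp : IsCompact Y)
    (hYB : Y = closure {y | y ∈ Y ∧ {t | y t ≠ 0}.Countable})
    (f : X × Y → ℝ) (hf : SeparatelyContinuous f) {ε : ℝ} (hε : 0 < ε) :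
    ∃ S : Set T, S.Countable ∧ ∀ (x : X) (y' y'' : Y),
      (∀ t ∈ S, (y' : T → ℝ) t = (y'' : T → ℝ) t) →
      |f (x, y') - f (x, y'')| ≤ 3 * ε := by
  classical
  set D : ↥Y × ↥Y → Set T := fun p => {t | (p.1 : T → ℝ) t ≠ (p.2 : T → ℝ) t} with hD
  set U : ↥Y × ↥Y → Set X := fun p => {x | ε < |f (x, p.1) - f (x, p.2)|} with hU
  set P : Set (↥Y × ↥Y) := {p | (∃ x, x ∈ U p) ∧ (D p).Countable} with hP
  set 𝒮 : Set (Set (↥Y × ↥Y)) := {C | C ⊆ P ∧ C.Pairwise fun p q => Disjoint (D p) (D q)}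
    with h𝒮
  obtain ⟨C, hCmax⟩ : ∃ C, Maximal (· ∈ 𝒮) C := by
    apply zorn_subset
    intro c hc hchain
    refine ⟨⋃₀ c, ⟨?_, ?_⟩, fun s hs => subset_sUnion_of_mem hs⟩
    · intro p hp
      obtain ⟨s, hs, hps⟩ := hp
      exact (hc hs).1 hps
    · intro p hp q hq hne
      obtain ⟨s₁, hs₁, hps⟩ := hp
      obtain ⟨s₂, hs₂, hqs⟩ := hq
      rcases hchain.total hs₁ hs₂ with h | h
      · exact (hc hs₂).2 (h hps) hqs hne
      · exact (hc hs₁).2 hps (h hqs) hne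
  have hCP : C ⊆ P := hCmax.1.1
  have hCpw : C.Pairwise fun p q => Disjoint (D p) (D q) := hCmax.1.2
  -- pointwise finiteness of the family (U p)_{p ∈ C}
  have hptfin : ∀ x : X, {p | p ∈ C ∧ x ∈ U p}.Finite := by
    intro x
    obtain ⟨F, hF⟩ := sw_lemma hYcomp ⟨fun y => f (x, y), hf.1 x⟩ hε
    set Q := {p | p ∈ C ∧ x ∈ U p} with hQ
    have hDF : ∀ p ∈ Q, ∃ t, t ∈ F ∧ t ∈ D p := by
      rintro p ⟨hpC, hxp⟩
      by_contra h
      push_neg at h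
      have hagree : ∀ t ∈ F, (p.1 : T → ℝ) t = (p.2 : T → ℝ) t := by
        intro t ht
        by_contra hne
        exact h t ht hne
      have := hF p.1 p.2 hagree
      simp only [ContinuousMap.coe_mk] at this
      have hxp' : ε < |f (x, p.1) - f (x, p.2)| := hxp
      linarith
    rcases Set.eq_empty_or_nonempty Q with hQe | ⟨p₀, hp₀⟩
    · rw [hQe]; exact Set.finite_empty
    · obtain ⟨t₀, _, _⟩ := hDF p₀ hp₀
      haveI : Nonempty T := ⟨t₀⟩
      set φ : ↥Y × ↥Y → T := fun p =>
        if h : ∃ t, t ∈ F ∧ t ∈ D p then h.choose else Classical.arbitrary T with hφ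
      have hφmem : ∀ p ∈ Q, φ p ∈ F ∧ φ p ∈ D p := by
        intro p hp
        have h := hDF p hp
        rw [hφ]
        simp only [dif_pos h]
        exact h.choose_spec
      apply Set.Finite.of_finite_image (f := φ)
      · exact F.finite_toSet.subset (by rintro t ⟨p, hp, rfl⟩; exact (hφmem p hp).1)
      · intro p hp q hq hpq
        by_contra hne
        have hd := hCpw hp.1 hq.1 hne
        exact (Set.disjoint_left.mp hd (hφmem p hp).2) (hpq ▸ (hφmem q hq).2)
  -- countability of C via property (II_ℵ₀)
  have hCcnt : C.Countable := by
    set 𝒱 : Set (Set X) := U '' C with h𝒱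
    have hcnt𝒱 : Countable ↥𝒱 := by
      apply hX ↥𝒱 (fun V => (V : Set X))
      · rintro ⟨V, p, hpC, rfl⟩
        have : Continuous fun x => |f (x, p.1) - f (x, p.2)| :=
          ((hf.2 p.1).sub (hf.2 p.2)).abs
        exact isOpen_Ioi.preimage this
      · rintro ⟨V, p, hpC, rfl⟩
        exact (hCP hpC).1
      · intro x
        have h1 : {V : ↥𝒱 | x ∈ (V : Set X)} ⊆
            Subtype.val ⁻¹' (U '' {p | p ∈ C ∧ x ∈ U p}) := by
          rintro ⟨V, p, hpC, rfl⟩ hx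
          exact ⟨p, ⟨hpC, hx⟩, rfl⟩
        exact (((hptfin x).image U).preimage Subtype.val_injective.injOn).subset h1
    have h𝒱cnt : 𝒱.Countable := countable_coe_iff.mp hcnt𝒱
    have hsub : C ⊆ ⋃ V ∈ 𝒱, {p | p ∈ C ∧ U p = V} := by
      intro p hp
      exact Set.mem_biUnion ⟨p, hp, rfl⟩ ⟨hp, rfl⟩
    refine Set.Countable.mono hsub ?_
    refine Set.Countable.biUnion h𝒱cnt fun V hV => ?_
    obtain ⟨p₀, hp₀C, rfl⟩ := hV
    obtain ⟨x₀, hx₀⟩ := (hCP hp₀C).1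
    have : {p | p ∈ C ∧ U p = U p₀} ⊆ {p | p ∈ C ∧ x₀ ∈ U p} := by
      rintro p ⟨hpC, hpV⟩
      exact ⟨hpC, hpV ▸ hx₀⟩
    exact ((hptfin x₀).subset this).countable
  set Sε : Set T := ⋃ p ∈ C, D p with hSε
  have hSεcnt : Sε.Countable := Set.Countable.biUnion hCcnt fun p hp => (hCP hp).2
  refine ⟨Sε, hSεcnt, ?_⟩
  intro x y' y'' hagree
  by_contra hgt
  push_neg at hgt
  obtain ⟨F, hF⟩ := sw_lemma hYcomp ⟨fun y => f (x, y), hf.1 x⟩ hε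
  obtain ⟨S, hScnt, hSsub, hSretr⟩ := exists_retr hYB (hSεcnt.union F.finite_toSet.countable)
  set u : T → ℝ := S.indicator ↑y' with hu'
  set v : T → ℝ := S.indicator ↑y'' with hv'
  have hu : u ∈ Y := hSretr _ y'.2
  have hv : v ∈ Y := hSretr _ y''.2
  have hFS : ∀ t ∈ F, t ∈ S := fun t ht => hSsub (Or.inr ht)
  have hSεS : ∀ t ∈ Sε, t ∈ S := fun t ht => hSsub (Or.inl ht)
  have h1 : |f (x, (⟨u, hu⟩ : ↥Y)) - f (x, y')| ≤ ε := by
    have := hF ⟨u, hu⟩ y' fun t ht => Set.indicator_of_mem (hFS t ht) _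
    simpa using this
  have h2 : |f (x, (⟨v, hv⟩ : ↥Y)) - f (x, y'')| ≤ ε := by
    have := hF ⟨v, hv⟩ y'' fun t ht => Set.indicator_of_mem (hFS t ht) _
    simpa using this
  have hgap : ε < |f (x, (⟨u, hu⟩ : ↥Y)) - f (x, (⟨v, hv⟩ : ↥Y))| := by
    have t1 : |f (x, y') - f (x, y'')| ≤
        |f (x, y') - f (x, ⟨u, hu⟩)| + |f (x, ⟨u, hu⟩) - f (x, ⟨v, hv⟩)| +
          |f (x, ⟨v, hv⟩) - f (x, y'')| := by
      calc |f (x, y') - f (x, y'')| ≤ |f (x, y') - f (x, ⟨u, hu⟩)| +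
            |f (x, ⟨u, hu⟩) - f (x, y'')| := abs_sub_le _ _ _
        _ ≤ |f (x, y') - f (x, ⟨u, hu⟩)| + (|f (x, ⟨u, hu⟩) - f (x, ⟨v, hv⟩)| +
            |f (x, ⟨v, hv⟩) - f (x, y'')|) := by
              have := abs_sub_le (f (x, ⟨u, hu⟩)) (f (x, ⟨v, hv⟩)) (f (x, y''))
              linarith
        _ = _ := by ring
    have e1 : |f (x, y') - f (x, ⟨u, hu⟩)| = |f (x, ⟨u, hu⟩) - f (x, y')| := abs_sub_comm _ _
    have e2 : |f (x, ⟨v, hv⟩) - f (x, y'')| = |f (x, ⟨v, hv⟩) - f (x, y'')| := rfl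
    rw [e1] at t1
    linarith
  set pstar : ↥Y × ↥Y := (⟨u, hu⟩, ⟨v, hv⟩) with hpstar
  have hDsub : D pstar ⊆ S := by
    intro t ht
    by_contra htS
    apply ht
    show u t = v t
    rw [hu', hv', Set.indicator_of_notMem htS, Set.indicator_of_notMem htS]
  have hDdisj : ∀ t ∈ Sε, t ∉ D pstar := by
    intro t ht hmem
    apply hmem
    show u t = v t
    rw [hu', hv', Set.indicator_of_mem (hSεS t ht), Set.indicator_of_mem (hSεS t ht)]
    exact hagree t ht
  have hpP : pstar ∈ P := ⟨⟨x, hgap⟩, hScnt.mono hDsub⟩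
  have hdisj : ∀ q ∈ C, Disjoint (D q) (D pstar) := by
    intro q hq
    refine Set.disjoint_left.mpr fun t htq htp => ?_
    exact hDdisj t (Set.mem_biUnion hq htq) htp
  have hins : insert pstar C ∈ 𝒮 := by
    constructor
    · intro p hp
      rcases hp with rfl | hp
      · exact hpP
      · exact hCP hp
    · refine Set.pairwise_insert.mpr ⟨hCpw, fun q hq _ => ⟨(hdisj q hq).symm, hdisj q hq⟩⟩
  have hpC : pstar ∈ C := hCmax.2 hins (Set.subset_insert _ _) (Set.mem_insert _ _)
  have hDempty : D pstar = ∅ := by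
    rw [Set.eq_empty_iff_forall_notMem]
    intro t ht
    exact hDdisj t (Set.mem_biUnion hpC ht) ht
  have huv : (⟨u, hu⟩ : ↥Y) = ⟨v, hv⟩ := by
    ext1
    funext t
    by_contra hne
    rw [Set.eq_empty_iff_forall_notMem] at hDempty
    exact hDempty t hne
  rw [huv] at hgap
  simp at hgap
  linarith


/-- if `X` has `(II_{ℵ₀})` and `Y ⊆ ℝ^T` is compact with the points of
countable support dense in `Y`, then every separately continuous `f : X × Y → ℝ`
depends on at most countably many coordinates with respect to the second variable. -/
theorem sepCont_depends_on_countably_many_coordinates_of_propertyII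
    {X : Type u} [TopologicalSpace X] (hX : PropertyIIAlephZero X)
    {T : Type*} (Y : Set (T → ℝ)) (hYcomp : IsCompact Y)
    (hYB : Y = closure {y | y ∈ Y ∧ {t | y t ≠ 0}.Countable})
    (f : X × Y → ℝ) (hf : SeparatelyContinuous f) :
    ∃ S : Set T, S.Countable ∧ ∀ (x : X) (y' y'' : Y),
      (∀ t ∈ S, (y' : T → ℝ) t = (y'' : T → ℝ) t) → f (x, y') = f (x, y'') := by
  have hkey : ∀ n : ℕ, ∃ S : Set T, S.Countable ∧ ∀ (x : X) (y' y'' : Y),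
      (∀ t ∈ S, (y' : T → ℝ) t = (y'' : T → ℝ) t) →
      |f (x, y') - f (x, y'')| ≤ 3 * (1 / (n + 1)) := fun n =>
    key_eps hX Y hYcomp hYB f hf (by positivity)
  choose Sf hScnt hSbd using hkey
  refine ⟨⋃ n, Sf n, Set.countable_iUnion hScnt, ?_⟩
  intro x y' y'' hagree
  have hbd : ∀ n : ℕ, |f (x, y') - f (x, y'')| ≤ 3 * (1 / (n + 1)) := by
    intro n
    exact hSbd n x y' y'' fun t ht => hagree t (Set.mem_iUnion.mpr ⟨n, ht⟩)
  have habs : |f (x, y') - f (x, y'')| ≤ 0 := by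
    by_contra h
    push_neg at h
    obtain ⟨n, hn⟩ := exists_nat_one_div_lt (show (0:ℝ) < |f (x, y') - f (x, y'')| / 3 by linarith)
    have hb := hbd n
    have h3 : 3 * ((1:ℝ) / (n + 1)) < 3 * (|f (x, y') - f (x, y'')| / 3) := by linarith
    have h4 : 3 * (|f (x, y') - f (x, y'')| / 3) = |f (x, y') - f (x, y'')| := by ring
    linarith
  have := abs_nonneg (f (x, y') - f (x, y''))
  have : f (x, y') - f (x, y'') = 0 := by
    have := abs_eq_zero.mp (le_antisymm habs (abs_nonneg _))
    exact this
  linarith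
end

section
/- Let X be a topological space with property (II_{ℵ₀}), T a set, Y ⊆ ℝ^T a compact subspace, B = {y ∈ Y : |supp y| ≤ ℵ₀}, and let f : X × Y → ℝ be separately continuous. Then for every ε > 0 there exists an at most countable set S_ε ⊆ T such that |f(x, b′) − f(x, b″)| ≤ ε for every x ∈ X and all b′, b″ ∈ B with b′|_{S_ε} = b″|_{S_ε}. -/
open Filter Set Uniformity

lemma aux_unifCont {T : Type*} {Y : Set (T → ℝ)} (hY : IsCompact Y)
    {g : Y → ℝ} (hg : Continuous g) {ε : ℝ} (hε : 0 < ε) :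
    ∃ (F : Finset T) (δ : T → ℝ), (∀ t, 0 < δ t) ∧ ∀ y y' : Y,
      (∀ t ∈ F, dist ((y : T → ℝ) t) ((y' : T → ℝ) t) < δ t) → |g y - g y'| < ε := by
  classical
  haveI : CompactSpace Y := isCompact_iff_compactSpace.mp hY
  have hgu : UniformContinuous g := CompactSpace.uniformContinuous_of_continuous hg
  have hV : {q : ℝ × ℝ | dist q.1 q.2 < ε} ∈ 𝓤 ℝ := Metric.dist_mem_uniformity hε
  have hE : (fun q : Y × Y => (g q.1, g q.2)) ⁻¹' {q : ℝ × ℝ | dist q.1 q.2 < ε} ∈ 𝓤 Y := hgu hV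
  rw [uniformity_subtype, Filter.mem_comap] at hE
  obtain ⟨E, hEmem, hEsub⟩ := hE
  rw [Pi.uniformity, Filter.mem_iInf] at hEmem
  obtain ⟨I, Ifin, V, hVmem, rfl⟩ := hEmem
  have key : ∀ i : I, ∃ d : ℝ, 0 < d ∧
      ∀ p : (T → ℝ) × (T → ℝ), dist (p.1 i) (p.2 i) < d → p ∈ V i := by
    intro i
    obtain ⟨Wi, hWi, hWsub⟩ := Filter.mem_comap.mp (hVmem i)
    obtain ⟨d, hd, h⟩ := Metric.mem_uniformity_dist.mp hWi
    exact ⟨d, hd, fun p hp => hWsub (h hp)⟩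
  choose di hdi hdimp using key
  refine ⟨Ifin.toFinset, fun t => if h : t ∈ I then di ⟨t, h⟩ else 1, ?_, ?_⟩
  · intro t; dsimp only; split_ifs with h
    · exact hdi _
    · exact one_pos
  · intro y y' hyy'
    have hmem : ((y : T → ℝ), (y' : T → ℝ)) ∈ ⋂ i, V i := by
      rw [Set.mem_iInter]
      intro i
      have ht : (i : T) ∈ Ifin.toFinset := Ifin.mem_toFinset.mpr i.2
      have := hyy' i ht
      simp only [dif_pos i.2, Subtype.coe_eta] at this
      exact hdimp i _ this
    have := hEsub (show ((y, y') : Y × Y) ∈ _ from hmem)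
    simpa [Real.dist_eq] using this

/-- if `X` has `(II_{ℵ₀})`, `Y ⊆ ℝ^T` is compact, `B` is the set of points
of `Y` with countable support and `f : X × Y → ℝ` is separately continuous, then for
every `ε > 0` there is an at most countable `S_ε ⊆ T` such that
`|f (x, b') − f (x, b'')| ≤ ε` whenever `b', b'' ∈ B` agree on `S_ε`. -/
theorem sepCont_almost_depends_on_countably_many_coordinates_on_countable_support
    {X : Type u} [TopologicalSpace X] (hX : PropertyIIAlephZero X)
    {T : Type*} (Y : Set (T → ℝ)) (hYcomp : IsCompact Y)
    (f : X × Y → ℝ) (hf : SeparatelyContinuous f) :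
    ∀ ε > (0 : ℝ), ∃ S : Set T, S.Countable ∧ ∀ (x : X) (b' b'' : Y),
      {t | (b' : T → ℝ) t ≠ 0}.Countable → {t | (b'' : T → ℝ) t ≠ 0}.Countable →
      (∀ t ∈ S, (b' : T → ℝ) t = (b'' : T → ℝ) t) →
      |f (x, b') - f (x, b'')| ≤ ε := by
  classical
  intro ε hε
  by_contra hcon
  push_neg at hcon
  -- hcon : ∀ S, S.Countable → ∃ x b' b'', cnt ∧ cnt ∧ agree ∧ ε < |...|
  set W : Type u := ((Cardinal.aleph 1 : Cardinal.{u}).ord).ToType with hWdef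
  let D : Type _ := {p : X × Y × Y //
    {t | (p.2.1 : T → ℝ) t ≠ 0}.Countable ∧ {t | (p.2.2 : T → ℝ) t ≠ 0}.Countable ∧
    ε < |f (p.1, p.2.1) - f (p.1, p.2.2)|}
  let supp : D → Set T := fun d =>
    {t | (d.1.2.1 : T → ℝ) t ≠ 0} ∪ {t | (d.1.2.2 : T → ℝ) t ≠ 0}
  have hsupp : ∀ d : D, (supp d).Countable := fun d => d.2.1.union d.2.2.1
  have hIio : ∀ α : W, (Set.Iio α).Countable := by
    intro α
    exact (Cardinal.countable_iff_lt_aleph_one _).mpr (Cardinal.mk_Iio_ord_toType α)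
  have wf : WellFounded ((· < ·) : W → W → Prop) := wellFounded_lt
  let step : ∀ α : W, (∀ β, β < α → D) → D := fun α prev =>
    let S : Set T := ⋃ β : Set.Iio α, supp (prev β.1 β.2)
    have hS : S.Countable := by
      haveI := (hIio α).to_subtype
      exact Set.countable_iUnion fun β => hsupp _
    let h1 := hcon S hS
    let h2 := h1.choose_spec
    let h3 := h2.choose_spec
    let h4 := h3.choose_spec
    ⟨(h1.choose, h2.choose, h3.choose), h4.1, h4.2.1, h4.2.2.2⟩
  let φ : W → D := wf.fix step
  have hfix : ∀ α, φ α = step α (fun β _ => φ β) := fun α => wf.fix_eq step α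
  let Sα : W → Set T := fun α => ⋃ β : Set.Iio α, supp (φ β.1)
  have hagree : ∀ α : W, ∀ t ∈ Sα α,
      ((φ α).1.2.1 : T → ℝ) t = ((φ α).1.2.2 : T → ℝ) t := by
    intro α
    rw [hfix α]
    have hS : (⋃ β : Set.Iio α, supp (φ β.1)).Countable := by
      haveI := (hIio α).to_subtype
      exact Set.countable_iUnion fun β => hsupp _
    exact (hcon _ hS).choose_spec.choose_spec.choose_spec.2.2.1
  let A : W → Set X := fun α =>
    {x | ε < |f (x, (φ α).1.2.1) - f (x, (φ α).1.2.2)|}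
  have hopen : ∀ α, IsOpen (A α) := by
    intro α
    have hc : Continuous fun x => |f (x, (φ α).1.2.1) - f (x, (φ α).1.2.2)| :=
      ((hf.2 _).sub (hf.2 _)).abs
    exact isOpen_lt continuous_const hc
  have hne : ∀ α, (A α).Nonempty := fun α => ⟨(φ α).1.1, (φ α).2.2.2⟩
  have hptfin : ∀ x : X, {α | x ∈ A α}.Finite := by
    intro x
    by_contra hinf
    obtain ⟨F, δ, hδ, hFδ⟩ := aux_unifCont hYcomp (hf.1 x) hε
    -- for each α in the bad set, find a coordinate in F where b' and b'' are far apart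
    have hbad : ∀ α : {α | x ∈ A α}, ∃ t ∈ F,
        ¬ dist (((φ α.1).1.2.1 : T → ℝ) t) (((φ α.1).1.2.2 : T → ℝ) t) < δ t := by
      rintro ⟨α, hα⟩
      by_contra h
      push_neg at h
      have := hFδ (φ α).1.2.1 (φ α).1.2.2 (fun t ht => h t ht)
      exact absurd hα (by simp only [A, Set.mem_setOf_eq]; push_neg; exact this.le)
    choose tα htαF htαfar using hbad
    haveI : Infinite {α | x ∈ A α} := Set.infinite_coe_iff.mpr hinf
    obtain ⟨a, b, hab, htab⟩ := Finite.exists_ne_map_eq_of_infinite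
      (fun α : {α | x ∈ A α} => (⟨tα α, htαF α⟩ : F))
    have hmain : ∀ a b : {α | x ∈ A α}, (a : W) < (b : W) → tα a = tα b → False := by
      intro a b hlt hteq
      have hne' : ((φ a.1).1.2.1 : T → ℝ) (tα a) ≠ ((φ a.1).1.2.2 : T → ℝ) (tα a) := by
        intro hcontra
        apply htαfar a
        rw [hcontra, dist_self]
        exact hδ _
      have hts : tα a ∈ supp (φ a.1) := by
        by_contra h
        simp only [supp, Set.mem_union, Set.mem_setOf_eq, not_or, not_not] at h
        exact hne' (h.1.trans h.2.symm)
      have hmem : tα b ∈ Sα b.1 := by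
        rw [← hteq]
        exact Set.mem_iUnion.mpr ⟨⟨a.1, hlt⟩, hts⟩
      have := hagree b.1 (tα b) hmem
      apply htαfar b
      rw [this, dist_self]
      exact hδ _
    have hab' : (a : W) ≠ (b : W) := fun h => hab (Subtype.ext h)
    have hteq : tα a = tα b := congrArg Subtype.val htab
    rcases hab'.lt_or_gt with h | h
    · exact hmain a b h hteq
    · exact hmain b a h hteq.symm
  have hcount : Countable W := hX W A hopen hne hptfin
  have : (Cardinal.aleph 1 : Cardinal.{u}) ≤ Cardinal.aleph0 := by
    have := Cardinal.mk_le_aleph0 (α := W)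
    rwa [hWdef, Cardinal.mk_ord_toType] at this
  exact absurd this (not_le.mpr Cardinal.aleph0_lt_aleph_one)
end

section
/- Let X be a pseudocompact space, Y a topological space, x₀ ∈ X, y₀ ∈ Y, and f : X × Y → ℝ a function whose set of discontinuity points is exactly {(x₀, y₀)}. Let δ > 0 and let U₀ be a closed neighborhood of x₀ in X such that |f(x, y₀) − f(x₀, y₀)| < δ for every x ∈ U₀. Let (U_n)_{n=1}^∞ and (V_n)_{n=1}^∞ be sequences of nonempty open sets U_n ⊆ U₀ in X and V_n in Y such that |f(x,y) − f(x₀,y₀)| > δ for all (x,y) ∈ U_n × V_n and all n ∈ ℕ. If (V_n)_{n=1}^∞ converges to y₀, then (U_n)_{n=1}^∞ converges to x₀. -/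
open Set Function Filter Topology

/-- A sequence of subsets of a topological space converges to a point `x₀`
if every neighborhood of `x₀` eventually contains all the sets. -/
def SeqConvergesTo {X : Type*} [TopologicalSpace X] (A : ℕ → Set X) (x₀ : X) : Prop :=
  ∀ U ∈ nhds x₀, ∃ n₀ : ℕ, ∀ n ≥ n₀, A n ⊆ U

lemma bump_exists {X : Type*} [TopologicalSpace X] [CompletelyRegularSpace X]
    {G : Set X} (hG : IsOpen G) {p : X} (hp : p ∈ G) :
    ∃ h : X → ℝ, Continuous h ∧ h p = 1 ∧ (∀ x, 0 ≤ h x) ∧ (∀ x, h x ≤ 1) ∧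
      ∀ x ∉ G, h x = 0 := by
  obtain ⟨f, hf, hfp, hfK⟩ :=
    CompletelyRegularSpace.completely_regular p Gᶜ hG.isClosed_compl (by simpa)
  refine ⟨fun x => 1 - (f x : ℝ), by fun_prop, by simp [hfp], ?_, ?_, ?_⟩
  · intro x; have := (f x).2.2; show (0:ℝ) ≤ 1 - (f x : ℝ); linarith
  · intro x; have := (f x).2.1; show (1:ℝ) - (f x : ℝ) ≤ 1; linarith
  · intro x hx
    have : f x = 1 := hfK hx
    simp [this]

lemma exists_cluster {X : Type*} [TopologicalSpace X] [CompletelyRegularSpace X]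
    (hpc : ∀ g : X → ℝ, Continuous g → ∃ M : ℝ, ∀ x, |g x| ≤ M)
    (G : ℕ → Set X) (hGo : ∀ k, IsOpen (G k)) (hGne : ∀ k, (G k).Nonempty) :
    ∃ x : X, ∀ O ∈ nhds x, {k | (G k ∩ O).Nonempty}.Infinite := by
  by_contra hcon
  push_neg at hcon
  have hlf : LocallyFinite G := by
    intro x
    obtain ⟨O, hO, hfin⟩ := hcon x
    exact ⟨O, hO, hfin⟩
  choose p hp using hGne
  choose h hc h1 h0le _ hsupp using fun k => bump_exists (hGo k) (hp k)
  set g : X → ℝ := fun x => ∑ᶠ k : ℕ, ((k : ℝ) + 1) * h k x with hg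
  have hsub : ∀ k : ℕ, support (fun x => ((k : ℝ) + 1) * h k x) ⊆ G k := by
    intro k x hx
    by_contra hxG
    exact hx (by simp [hsupp k x hxG])
  have hgc : Continuous g :=
    continuous_finsum (fun k => continuous_const.mul (hc k)) (hlf.subset hsub)
  obtain ⟨M, hM⟩ := hpc g hgc
  obtain ⟨k, hk⟩ := exists_nat_gt M
  have hfin : (support fun j : ℕ => ((j : ℝ) + 1) * h j (p k)).Finite := by
    obtain ⟨O, hO, hfin⟩ := hlf (p k)
    apply hfin.subset
    intro j hj
    exact ⟨p k, hsub j hj, mem_of_mem_nhds hO⟩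
  have hle : ((k : ℝ) + 1) * h k (p k) ≤ g (p k) :=
    single_le_finsum (f := fun j : ℕ => ((j : ℝ) + 1) * h j (p k)) k hfin
      fun j => mul_nonneg (by positivity) (h0le j _)
  have hMk := hM (p k)
  rw [h1 k, mul_one] at hle
  have := abs_le.mp hMk
  linarith

/-- Let `X` be pseudocompact, `f : X × Y → ℝ` have discontinuity set
exactly `{(x₀, y₀)}`, `U₀` a closed neighborhood of `x₀` on which `|f (·, y₀) − f (x₀, y₀)| < δ`,
and `(U_n)`, `(V_n)` nonempty open sets with `U_n ⊆ U₀` and `|f − f (x₀, y₀)| > δ` on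
`U_n × V_n`. If `V_n → y₀` then `U_n → x₀`. -/
theorem seqConvergesTo_of_oscillation_pseudocompact {X Y : Type*} [TopologicalSpace X]
    [CompletelyRegularSpace X]
    (hpc : ∀ g : X → ℝ, Continuous g → ∃ M : ℝ, ∀ x, |g x| ≤ M)
    [TopologicalSpace Y] (x₀ : X) (y₀ : Y) (f : X × Y → ℝ)
    (hD : {p : X × Y | ¬ ContinuousAt f p} = {(x₀, y₀)})
    (δ : ℝ) (hδ : 0 < δ)
    (U₀ : Set X) (hU₀nhds : U₀ ∈ nhds x₀) (hU₀closed : IsClosed U₀)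
    (hU₀ : ∀ x ∈ U₀, |f (x, y₀) - f (x₀, y₀)| < δ)
    (U : ℕ → Set X) (V : ℕ → Set Y)
    (hUopen : ∀ n, IsOpen (U n)) (hUne : ∀ n, (U n).Nonempty) (hUsub : ∀ n, U n ⊆ U₀)
    (hVopen : ∀ n, IsOpen (V n)) (hVne : ∀ n, (V n).Nonempty)
    (hosc : ∀ n, ∀ x ∈ U n, ∀ y ∈ V n, |f (x, y) - f (x₀, y₀)| > δ)
    (hVconv : SeqConvergesTo V y₀) :
    SeqConvergesTo U x₀ := by
  by_contra hcon
  unfold SeqConvergesTo at hcon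
  push_neg at hcon
  obtain ⟨N, hN, hfreq⟩ := hcon
  obtain ⟨W, hWN, hWopen, hWx⟩ := mem_nhds_iff.mp hN
  -- a separating function for W
  obtain ⟨φ, hφc, hφ0, hφ1⟩ :=
    CompletelyRegularSpace.completely_regular x₀ Wᶜ hWopen.isClosed_compl (by simpa)
  set ψ : X → ℝ := fun x => (φ x : ℝ) with hψ
  have hψc : Continuous ψ := by fun_prop
  -- extract a subsequence escaping N
  obtain ⟨m, hm, hmP⟩ : ∃ m : ℕ → ℕ, StrictMono m ∧ ∀ k, ¬ U (m k) ⊆ N := by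
    exact extraction_of_frequently_atTop (P := fun n => ¬ U n ⊆ N)
      (Filter.frequently_atTop.mpr hfreq)
  set G : ℕ → Set X := fun k => U (m k) ∩ {x | 1 / 2 < ψ x} with hG
  have hGo : ∀ k, IsOpen (G k) :=
    fun k => (hUopen _).inter (isOpen_lt continuous_const hψc)
  have hGne : ∀ k, (G k).Nonempty := by
    intro k
    obtain ⟨x, hxU, hxN⟩ := Set.not_subset.mp (hmP k)
    have hxW : x ∉ W := fun hxW => hxN (hWN hxW)
    have : ψ x = 1 := by
      have := hφ1 hxW
      simp [hψ, this]
    exact ⟨x, hxU, by simp only [Set.mem_setOf_eq, this]; norm_num⟩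
  obtain ⟨z, hz⟩ := exists_cluster hpc G hGo hGne
  -- z ∈ U₀
  have hzU₀ : z ∈ U₀ := by
    by_contra hzU₀
    obtain ⟨k, x, hxG, hxO⟩ := (hz U₀ᶜ (hU₀closed.isOpen_compl.mem_nhds hzU₀)).nonempty
    exact hxO (hUsub _ hxG.1)
  -- ψ z ≥ 1/2
  have hzψ : 1 / 2 ≤ ψ z := by
    by_contra hlt
    push_neg at hlt
    have hO : {x | ψ x < 1 / 2} ∈ nhds z :=
      (isOpen_lt hψc continuous_const).mem_nhds hlt
    obtain ⟨k, x, hxG, hxO⟩ := (hz _ hO).nonempty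
    have h1 : 1 / 2 < ψ x := hxG.2
    have h2 : ψ x < 1 / 2 := hxO
    linarith
  have hzne : z ≠ x₀ := by
    intro h
    rw [h] at hzψ
    have : ψ x₀ = 0 := by simp [hψ, hφ0]
    rw [this] at hzψ
    norm_num at hzψ
  -- f continuous at (z, y₀)
  have hca : ContinuousAt f (z, y₀) := by
    by_contra hnc
    have : (z, y₀) ∈ ({(x₀, y₀)} : Set (X × Y)) := hD ▸ hnc
    exact hzne (congrArg Prod.fst (Set.mem_singleton_iff.mp this))
  have hmemS : |f (z, y₀) - f (x₀, y₀)| < δ := hU₀ z hzU₀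
  have hSopen : IsOpen {r : ℝ | |r - f (x₀, y₀)| < δ} :=
    isOpen_lt (by fun_prop) continuous_const
  have hpre : f ⁻¹' {r : ℝ | |r - f (x₀, y₀)| < δ} ∈ nhds (z, y₀) :=
    hca.preimage_mem_nhds (hSopen.mem_nhds hmemS)
  rw [mem_nhds_prod_iff] at hpre
  obtain ⟨N', hN', M', hM', hsub⟩ := hpre
  obtain ⟨n₀, hn₀⟩ := hVconv M' hM'
  obtain ⟨k, hkmem, hkgt⟩ := (hz N' hN').exists_gt n₀
  obtain ⟨x, hxG, hxN'⟩ := hkmem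
  obtain ⟨y, hy⟩ := hVne (m k)
  have hmk : n₀ ≤ m k := le_trans (le_of_lt hkgt) (hm.le_apply)
  have hyM' : y ∈ M' := hn₀ (m k) hmk hy
  have h1 : |f (x, y) - f (x₀, y₀)| > δ := hosc (m k) x hxG.1 y hy
  have h2 : |f (x, y) - f (x₀, y₀)| < δ := hsub ⟨hxN', hyM'⟩
  linarith
end

section
/- Let X be a separable pseudocompact space, Y a compact Hausdorff space, x₀ ∈ X and y₀ ∈ Y non-isolated points, and suppose there exists a separately continuous function f : X × Y → ℝ whose set of discontinuity points is exactly {(x₀, y₀)}. Then there exist sequences (U_n)_{n=1}^∞ and (V_n)_{n=1}^∞ of nonempty open sets U_n ⊆ X and V_n ⊆ Y which converge to x₀ and y₀ respectively. -/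
open Set Topology Filter

lemma feebly_compact_of_bounded {X : Type*} [TopologicalSpace X] [CompletelyRegularSpace X]
    (hpc : ∀ g : X → ℝ, Continuous g → ∃ M : ℝ, ∀ x, |g x| ≤ M)
    (G : ℕ → Set X) (hop : ∀ n, IsOpen (G n)) (hne : ∀ n, (G n).Nonempty)
    (hdec : ∀ {m n : ℕ}, m ≤ n → G n ⊆ G m) :
    ∃ p, ∀ n, p ∈ closure (G n) := by
  by_contra hcon
  push_neg at hcon
  choose x hx using hne
  have key : ∀ n : ℕ, ∃ g : X → ℝ, Continuous g ∧ g (x n) = 1 ∧ (∀ z, 0 ≤ g z ∧ g z ≤ 1) ∧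
      ∀ z, z ∉ G n → g z = 0 := by
    intro n
    obtain ⟨u, hu, hux, huK⟩ := CompletelyRegularSpace.completely_regular (x n) (G n)ᶜ
      (hop n).isClosed_compl (by simp [hx n])
    refine ⟨fun z => 1 - (u z : ℝ), continuous_const.sub (continuous_subtype_val.comp hu),
      by simp [hux], fun z => ⟨by simpa using (u z).2.2, by simpa using (u z).2.1⟩, fun z hz => ?_⟩
    have : u z = 1 := huK hz
    simp [this]
  choose g hgc hgx hgb hgs using key
  set F : ℕ → X → ℝ := fun n z => (n : ℝ) * g n z with hF
  have hsupp : ∀ n z, F n z ≠ 0 → z ∈ G n := by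
    intro n z hz
    by_contra hzn
    exact hz (by simp [hF, hgs n z hzn])
  have hlf : LocallyFinite fun n => Function.support (F n) := by
    intro z
    obtain ⟨m, hm⟩ := hcon z
    refine ⟨(closure (G m))ᶜ, (isClosed_closure.isOpen_compl).mem_nhds hm, ?_⟩
    refine (Set.finite_Iio m).subset ?_
    intro n hn
    simp only [Set.mem_Iio]
    by_contra hnm
    push_neg at hnm
    obtain ⟨w, hw1, hw2⟩ := hn
    exact hw2 (subset_closure (hdec hnm (hsupp n w hw1)))
  have hcont : Continuous fun z => ∑ᶠ n, F n z :=
    continuous_finsum (fun n => continuous_const.mul (hgc n)) hlf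
  obtain ⟨M, hM⟩ := hpc _ hcont
  obtain ⟨N, hN⟩ := exists_nat_gt M
  have h1 : F N (x N) ≤ ∑ᶠ n, F n (x N) := by
    refine single_le_finsum N ?_ (fun j => mul_nonneg (Nat.cast_nonneg j) (hgb j (x N)).1)
    exact hlf.point_finite (x N)
  have h2 : (N : ℝ) = F N (x N) := by simp [hF, hgx N]
  have h3 : ∑ᶠ n, F n (x N) ≤ M := le_trans (le_abs_self _) (hM (x N))
  linarith [h2 ▸ h1]

lemma box_of_continuousAt {X Y : Type*} [TopologicalSpace X] [TopologicalSpace Y]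
    {f : X × Y → ℝ} {a : X} {b : Y} (hc : ContinuousAt f (a, b)) {e : ℝ} (he : 0 < e) :
    ∃ N O, IsOpen N ∧ a ∈ N ∧ IsOpen O ∧ b ∈ O ∧
      ∀ x ∈ N, ∀ y ∈ O, |f (x, y) - f (a, b)| < e := by
  have hmem : f ⁻¹' Metric.ball (f (a, b)) e ∈ nhds (a, b) := hc (Metric.ball_mem_nhds _ he)
  rw [mem_nhds_prod_iff'] at hmem
  obtain ⟨u, v, hu, hv, hau, hbv, huv⟩ := hmem
  refine ⟨u, v, hu, hv, hau, hbv, fun x hx y hy => ?_⟩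
  have := huv (Set.mk_mem_prod hx hy)
  simpa [Metric.mem_ball, Real.dist_eq] using this

/-- if `X` is separable pseudocompact, `Y` is compact Hausdorff,
`x₀ ∈ X` and `y₀ ∈ Y` are non-isolated, and some separately continuous
`f : X × Y → ℝ` has discontinuity set exactly `{(x₀, y₀)}`, then there are sequences
of nonempty open sets converging to `x₀` and to `y₀`. -/
theorem exists_open_seq_of_onepoint_discontinuity_separable_pseudocompact {X Y : Type*}
    [TopologicalSpace X] [CompletelyRegularSpace X] [TopologicalSpace.SeparableSpace X]
    (hpc : ∀ g : X → ℝ, Continuous g → ∃ M : ℝ, ∀ x, |g x| ≤ M)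
    [TopologicalSpace Y] [CompactSpace Y] [T2Space Y]
    (x₀ : X) (y₀ : Y) (hx₀ : ¬ IsOpen ({x₀} : Set X)) (hy₀ : ¬ IsOpen ({y₀} : Set Y))
    (f : X × Y → ℝ) (hf : SeparatelyContinuous f)
    (hD : {p : X × Y | ¬ ContinuousAt f p} = {(x₀, y₀)}) :
    ∃ (U : ℕ → Set X) (V : ℕ → Set Y),
      (∀ n, IsOpen (U n)) ∧ (∀ n, (U n).Nonempty) ∧
      (∀ n, IsOpen (V n)) ∧ (∀ n, (V n).Nonempty) ∧
      SeqConvergesTo U x₀ ∧ SeqConvergesTo V y₀ := by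
  classical
  obtain ⟨hfy, hfx⟩ := hf
  haveI : Nonempty X := ⟨x₀⟩
  obtain ⟨d, hd⟩ := TopologicalSpace.exists_dense_seq X
  -- continuity away from (x₀, y₀)
  have hcont : ∀ p : X × Y, p ≠ (x₀, y₀) → ContinuousAt f p := by
    intro p hp
    by_contra h
    have : p ∈ {p : X × Y | ¬ ContinuousAt f p} := h
    rw [hD, Set.mem_singleton_iff] at this
    exact hp this
  have hdisc : ¬ ContinuousAt f (x₀, y₀) := by
    have : (x₀, y₀) ∈ {p : X × Y | ¬ ContinuousAt f p} := by rw [hD]; exact rfl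
    exact this
  -- quantitative discontinuity
  rw [ContinuousAt, Metric.tendsto_nhds] at hdisc
  push_neg at hdisc
  obtain ⟨ε₀, hε₀, hfr⟩ := hdisc
  set ε : ℝ := ε₀ / 4 with hεdef
  have hε : 0 < ε := by positivity
  have hfr' : ∀ W ∈ nhds (x₀, y₀), ∃ p ∈ W, 4 * ε ≤ |f p - f (x₀, y₀)| := by
    intro W hW
    obtain ⟨p, hpW, hpd⟩ := Filter.frequently_iff.mp hfr hW
    refine ⟨p, hpW, ?_⟩
    rw [Real.dist_eq] at hpd
    calc 4 * ε = ε₀ := by rw [hεdef]; ring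
    _ ≤ |f p - f (x₀, y₀)| := hpd
  -- the auxiliary function δ on Y built from the dense sequence
  set T : ℕ → Y → ℝ := fun k y => (1/2 : ℝ)^k * min 1 |f (d k, y) - f (d k, y₀)| with hT
  have hTnn : ∀ k y, 0 ≤ T k y := fun k y =>
    mul_nonneg (by positivity) (le_min zero_le_one (abs_nonneg _))
  have hTle : ∀ k y, T k y ≤ (1/2 : ℝ)^k := fun k y =>
    mul_le_of_le_one_right (by positivity) (min_le_left _ _)
  have hTsum : ∀ y, Summable fun k => T k y := fun y =>
    Summable.of_nonneg_of_le (fun k => hTnn k y) (fun k => hTle k y) summable_geometric_two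
  set δ : Y → ℝ := fun y => ∑' k, T k y with hδdef
  have hδc : Continuous δ := by
    refine continuous_tsum (fun k => ?_) summable_geometric_two (fun k y => ?_)
    · exact continuous_const.mul
        (Continuous.min continuous_const ((hfy (d k)).sub continuous_const).abs)
    · rw [Real.norm_eq_abs, abs_of_nonneg (hTnn k y)]; exact hTle k y
  have hδnn : ∀ y, 0 ≤ δ y := fun y => tsum_nonneg (fun k => hTnn k y)
  have hδy₀ : δ y₀ = 0 := by simp [hδdef, hT]
  have hZeq : ∀ y, δ y = 0 → ∀ x, f (x, y) = f (x, y₀) := by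
    intro y hy
    have hk : ∀ k, f (d k, y) = f (d k, y₀) := by
      intro k
      have h1 : T k y ≤ 0 := hy ▸ Summable.le_tsum (hTsum y) k (fun j _ => hTnn j y)
      have h2 : T k y = 0 := le_antisymm h1 (hTnn k y)
      rw [hT] at h2
      rcases mul_eq_zero.mp h2 with h | h
      · exact absurd h (by positivity)
      · rcases min_eq_iff.mp h with ⟨h', _⟩ | ⟨h', _⟩
        · exact absurd h' one_ne_zero
        · have := abs_eq_zero.mp h'
          linarith [this]
    have heq : (fun x => f (x, y)) = fun x => f (x, y₀) :=
      Continuous.ext_on hd (hfx y) (hfx y₀) (by rintro _ ⟨k, rfl⟩; exact hk k)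
    exact fun x => congrFun heq x
  -- shrinking of sublevel sets of δ into open sets containing Z
  have hQshrink : ∀ O : Set Y, IsOpen O → {y | δ y = 0} ⊆ O →
      ∃ k : ℕ, ∀ y, δ y ≤ 1/((k : ℝ)+1) → y ∈ O := by
    intro O hO hZO
    set C : ℕ → Set Y := fun n => {y | δ y ≤ 1/((n : ℝ)+1)} ∩ Oᶜ with hC
    have hCcl : ∀ n, IsClosed (C n) :=
      fun n => (isClosed_le hδc continuous_const).inter hO.isClosed_compl
    have hCint : (Set.univ ∩ ⋂ n, C n) = ∅ := by
      rw [Set.univ_inter]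
      ext y
      simp only [Set.mem_iInter, Set.mem_empty_iff_false, iff_false]
      intro hy
      have h0 : δ y = 0 := by
        refine le_antisymm ?_ (hδnn y)
        by_contra h
        push_neg at h
        obtain ⟨n, hn⟩ := exists_nat_one_div_lt h
        have := (hy n).1
        simp only [Set.mem_setOf_eq] at this
        have : δ y < δ y := lt_of_le_of_lt this hn
        exact lt_irrefl _ this
      exact (hy 0).2 (hZO h0)
    obtain ⟨t, ht⟩ := isCompact_univ.elim_finite_subfamily_closed C hCcl hCint
    refine ⟨t.sup id, fun y hy => ?_⟩
    by_contra hyO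
    have hmem : y ∈ Set.univ ∩ ⋂ n ∈ t, C n := by
      refine ⟨trivial, Set.mem_iInter₂.mpr fun i hi => ?_⟩
      refine ⟨le_trans hy ?_, hyO⟩
      have hle : (i : ℝ) + 1 ≤ ((t.sup id : ℕ) : ℝ) + 1 := by
        have h' : i ≤ t.sup id := Finset.le_sup (f := (id : ℕ → ℕ)) hi
        exact_mod_cast Nat.succ_le_succ h'
      exact one_div_le_one_div_of_le (by positivity) hle
    rw [ht] at hmem
    exact hmem
  -- the open sets U n
  set mnd : X → Y → ℝ := fun x y => min |f (x, y) - f (x, y₀)| |f (x, y) - f (x₀, y)| with hmnd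
  set U : ℕ → Set X := fun n => {x | ∃ y, δ y < 1/((n : ℝ)+1) ∧ ε < mnd x y} with hUdef
  have hUopen : ∀ n, IsOpen (U n) := by
    intro n
    have hrw : U n = ⋃ (y : Y) (_ : δ y < 1/((n : ℝ)+1)), {x | ε < mnd x y} := by
      ext x
      simp only [hUdef, Set.mem_setOf_eq, Set.mem_iUnion, exists_prop]
    rw [hrw]
    refine isOpen_iUnion fun y => isOpen_iUnion fun _ => ?_
    exact isOpen_lt continuous_const
      (Continuous.min (((hfx y).sub (hfx y₀)).abs) (((hfx y).sub continuous_const).abs))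
  have hUdec : ∀ {m n : ℕ}, m ≤ n → U n ⊆ U m := by
    intro m n hmn x hxn
    obtain ⟨y, hy1, hy2⟩ := hxn
    refine ⟨y, lt_of_lt_of_le hy1 ?_, hy2⟩
    have hle : (m : ℝ) + 1 ≤ (n : ℝ) + 1 := by exact_mod_cast Nat.succ_le_succ hmn
    exact one_div_le_one_div_of_le (by positivity) hle
  have hUne : ∀ n, ∃ x, x ∈ U n := by
    intro n
    have hWx : IsOpen {x : X | |f (x, y₀) - f (x₀, y₀)| < ε} :=
      isOpen_lt (((hfx y₀).sub continuous_const).abs) continuous_const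
    have hWy : IsOpen ({y : Y | δ y < 1/((n : ℝ)+1)} ∩ {y | |f (x₀, y) - f (x₀, y₀)| < ε}) :=
      (isOpen_lt hδc continuous_const).inter
        (isOpen_lt (((hfy x₀).sub continuous_const).abs) continuous_const)
    have hmemx : x₀ ∈ {x : X | |f (x, y₀) - f (x₀, y₀)| < ε} := by
      simp only [Set.mem_setOf_eq, sub_self, abs_zero]; exact hε
    have hmemy : y₀ ∈ {y : Y | δ y < 1/((n : ℝ)+1)} ∩ {y | |f (x₀, y) - f (x₀, y₀)| < ε} := by
      constructor
      · simp only [Set.mem_setOf_eq, hδy₀]; positivity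
      · simp only [Set.mem_setOf_eq, sub_self, abs_zero]; exact hε
    obtain ⟨p, hpW, hpd⟩ := hfr' _ (prod_mem_nhds (hWx.mem_nhds hmemx) (hWy.mem_nhds hmemy))
    obtain ⟨x, y⟩ := p
    have hp1 := hpW.1
    have hp2 := hpW.2.1
    have hp3 := hpW.2.2
    simp only [Set.mem_setOf_eq] at hp1 hp2 hp3
    refine ⟨x, y, hp2, lt_min ?_ ?_⟩
    · have htr : |f (x, y) - f (x₀, y₀)| ≤ |f (x, y) - f (x, y₀)| + |f (x, y₀) - f (x₀, y₀)| :=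
        abs_sub_le _ _ _
      linarith
    · have htr : |f (x, y) - f (x₀, y₀)| ≤ |f (x, y) - f (x₀, y)| + |f (x₀, y) - f (x₀, y₀)| :=
        abs_sub_le _ _ _
      linarith
  -- convergence of U n to x₀
  have hUconv : ∀ S ∈ nhds x₀, ∃ n, U n ⊆ S := by
    intro S hS
    obtain ⟨u, hu, hux, huK⟩ := CompletelyRegularSpace.completely_regular x₀ (interior S)ᶜ
      isOpen_interior.isClosed_compl (by simpa using mem_interior_iff_mem_nhds.mpr hS)
    set U' : Set X := {z | (u z : ℝ) < 1/2} with hU'def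
    have hU'open : IsOpen U' := isOpen_lt (continuous_subtype_val.comp hu) continuous_const
    have hx₀U' : x₀ ∈ U' := by
      simp only [hU'def, Set.mem_setOf_eq, hux]
      norm_num
    have hclU' : closure U' ⊆ S := by
      have hstep : closure U' ⊆ {z | (u z : ℝ) ≤ 1/2} :=
        closure_minimal (fun z hz => show (u z : ℝ) ≤ 1/2 from le_of_lt hz)
          (isClosed_le (continuous_subtype_val.comp hu) continuous_const)
      refine hstep.trans (fun z hz => ?_)
      by_contra hzS
      have hzint : z ∉ interior S := fun hc => hzS (interior_subset hc)
      have : u z = 1 := huK hzint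
      rw [Set.mem_setOf_eq, this] at hz
      norm_num at hz
    by_contra hno
    push_neg at hno
    set G : ℕ → Set X := fun n => U n ∩ (closure U')ᶜ with hGdef
    have hGopen : ∀ n, IsOpen (G n) := fun n => (hUopen n).inter isClosed_closure.isOpen_compl
    have hGne : ∀ n, (G n).Nonempty := by
      intro n
      obtain ⟨x, hxU, hxS⟩ := Set.not_subset.mp (hno n)
      exact ⟨x, hxU, fun hc => hxS (hclU' hc)⟩
    have hGdec : ∀ {m n : ℕ}, m ≤ n → G n ⊆ G m :=
      fun hmn => Set.inter_subset_inter_left _ (hUdec hmn)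
    obtain ⟨p, hp⟩ := feebly_compact_of_bounded hpc G hGopen hGne hGdec
    have hpx₀ : p ≠ x₀ := by
      intro h
      obtain ⟨w, hw1, hw2⟩ := mem_closure_iff.mp (hp 0) U' hU'open (h ▸ hx₀U')
      exact hw2.2 (subset_closure hw1)
    have hbox : ∀ z : Y, δ z = 0 → ∃ (N : Set X) (O : Set Y), IsOpen N ∧ p ∈ N ∧ IsOpen O ∧
        z ∈ O ∧ ∀ x ∈ N, ∀ y ∈ O, |f (x, y) - f (p, y₀)| < ε/2 := by
      intro z hz
      have hc : ContinuousAt f (p, z) := by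
        refine hcont (p, z) ?_
        simp only [Prod.mk.injEq, ne_eq, not_and]
        intro h; exact absurd h hpx₀
      obtain ⟨N, O, h1, h2, h3, h4, h5⟩ := box_of_continuousAt hc (by positivity : (0:ℝ) < ε/2)
      refine ⟨N, O, h1, h2, h3, h4, fun x hx y hy => ?_⟩
      have := h5 x hx y hy
      rwa [hZeq z hz p] at this
    choose! N O hNop hpN hOop hzO hNO using hbox
    have hZcomp : IsCompact {y | δ y = 0} := (isClosed_eq hδc continuous_const).isCompact
    obtain ⟨t, htZ, hcov⟩ := hZcomp.elim_nhds_subcover O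
      (fun z hz => ((hOop z hz).mem_nhds (hzO z hz)))
    set Nfin : Set X := ⋂ z ∈ t, N z with hNfindef
    have hNfinop : IsOpen Nfin :=
      isOpen_biInter_finset (fun z hz => hNop z (htZ z hz))
    have hpNfin : p ∈ Nfin := Set.mem_iInter₂.mpr fun z hz => hpN z (htZ z hz)
    set O' : Set Y := ⋃ z ∈ t, O z with hO'def
    have hO'op : IsOpen O' := isOpen_biUnion (fun z hz => hOop z (htZ z hz))
    have hZO' : {y | δ y = 0} ⊆ O' := hcov
    have hctrl : ∀ x ∈ Nfin, ∀ y ∈ O', |f (x, y) - f (p, y₀)| < ε/2 := by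
      intro x hx y hy
      obtain ⟨z, hz, hyz⟩ := Set.mem_iUnion₂.mp hy
      exact hNO z (htZ z hz) x (Set.mem_iInter₂.mp hx z hz) y hyz
    have hy₀O' : y₀ ∈ O' := hZO' hδy₀
    obtain ⟨k, hk⟩ := hQshrink O' hO'op hZO'
    have hdisj : ∀ x ∈ Nfin, x ∉ U k := by
      intro x hx hxU
      obtain ⟨y, hy1, hy2⟩ := hxU
      have hyO' : y ∈ O' := hk y (le_of_lt hy1)
      have e1 : |f (x, y) - f (p, y₀)| < ε/2 := hctrl x hx y hyO'
      have e2 : |f (x, y₀) - f (p, y₀)| < ε/2 := hctrl x hx y₀ hy₀O'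
      have e3 : ε < |f (x, y) - f (x, y₀)| := lt_of_lt_of_le hy2 (min_le_left _ _)
      have htr : |f (x, y) - f (x, y₀)| ≤ |f (x, y) - f (p, y₀)| + |f (p, y₀) - f (x, y₀)| :=
        abs_sub_le _ _ _
      rw [abs_sub_comm (f (p, y₀))] at htr
      linarith
    obtain ⟨w, hw1, hw2⟩ := mem_closure_iff.mp (hp k) Nfin hNfinop hpNfin
    exact hdisj w hw1 hw2.1
  -- the V sets
  choose xs hxs using hUne
  set Cs : X → Set Y := fun x => {y | ε < mnd x y} with hCsdef
  have hCsopen : ∀ x, IsOpen (Cs x) := by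
    intro x
    exact isOpen_lt continuous_const
      (Continuous.min (((hfy x).sub continuous_const).abs) (((hfy x).sub (hfy x₀)).abs))
  set V : ℕ → Set Y := fun n => Cs (xs n) ∩ {y | δ y < 1/((n : ℝ)+1)} with hVdef
  have hVopen : ∀ n, IsOpen (V n) :=
    fun n => (hCsopen (xs n)).inter (isOpen_lt hδc continuous_const)
  have hVne : ∀ n, (V n).Nonempty := by
    intro n
    obtain ⟨y, hy1, hy2⟩ := hxs n
    exact ⟨y, hy2, hy1⟩
  -- convergence of V n to y₀
  have hVconv : SeqConvergesTo V y₀ := by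
    intro S hS
    have hy₀int : y₀ ∈ interior S := mem_interior_iff_mem_nhds.mpr hS
    have hKcomp : IsCompact ((interior S)ᶜ : Set Y) :=
      (isOpen_interior.isClosed_compl).isCompact
    have hbox2 : ∀ z : Y, z ∈ ((interior S)ᶜ : Set Y) → ∃ (N : Set X) (O : Set Y),
        IsOpen N ∧ x₀ ∈ N ∧ IsOpen O ∧ z ∈ O ∧
        ∀ x ∈ N, ∀ y ∈ O, |f (x, y) - f (x₀, y)| < ε := by
      intro z hz
      have hzy₀ : z ≠ y₀ := fun h => hz (h ▸ hy₀int)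
      have hc : ContinuousAt f (x₀, z) := by
        refine hcont (x₀, z) ?_
        simp only [Prod.mk.injEq, ne_eq, not_and]
        intro _; exact hzy₀
      obtain ⟨N, O, h1, h2, h3, h4, h5⟩ := box_of_continuousAt hc (by positivity : (0:ℝ) < ε/2)
      refine ⟨N, O ∩ {y | |f (x₀, y) - f (x₀, z)| < ε/2}, h1, h2,
        h3.inter (isOpen_lt (((hfy x₀).sub continuous_const).abs) continuous_const), ?_,
        fun x hx y hy => ?_⟩
      · refine ⟨h4, ?_⟩
        simp only [Set.mem_setOf_eq, sub_self, abs_zero]; positivity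
      · have e1 := h5 x hx y hy.1
        have e2 : |f (x₀, y) - f (x₀, z)| < ε/2 := hy.2
        have htr : |f (x, y) - f (x₀, y)| ≤ |f (x, y) - f (x₀, z)| + |f (x₀, z) - f (x₀, y)| :=
          abs_sub_le _ _ _
        rw [abs_sub_comm (f (x₀, z))] at htr
        linarith
    choose! N2 O2 hN2op hx₀N2 hO2op hzO2 hNO2 using hbox2
    obtain ⟨t, htK, hcov⟩ := hKcomp.elim_nhds_subcover O2
      (fun z hz => ((hO2op z hz).mem_nhds (hzO2 z hz)))
    set W : Set X := ⋂ z ∈ t, N2 z with hWdef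
    have hWop : IsOpen W := isOpen_biInter_finset (fun z hz => hN2op z (htK z hz))
    have hx₀W : x₀ ∈ W := Set.mem_iInter₂.mpr fun z hz => hx₀N2 z (htK z hz)
    have hWprop : ∀ x ∈ W, Cs x ⊆ interior S := by
      intro x hx y hy
      by_contra hyS
      obtain ⟨z, hz, hyz⟩ := Set.mem_iUnion₂.mp (hcov hyS)
      have e1 : |f (x, y) - f (x₀, y)| < ε := hNO2 z (htK z hz) x (Set.mem_iInter₂.mp hx z hz) y hyz
      have e2 : ε < |f (x, y) - f (x₀, y)| := lt_of_lt_of_le hy (min_le_right _ _)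
      linarith
    obtain ⟨n₁, hn₁⟩ := hUconv W (hWop.mem_nhds hx₀W)
    refine ⟨n₁, fun n hn => ?_⟩
    have hxsW : xs n ∈ W := hn₁ (hUdec hn (hxs n))
    exact fun y hy => interior_subset (hWprop (xs n) hxsW hy.1)
  refine ⟨U, V, hUopen, fun n => ⟨xs n, hxs n⟩, hVopen, hVne, ?_, hVconv⟩
  intro S hS
  obtain ⟨n, hn⟩ := hUconv S hS
  exact ⟨n, fun m hm => (hUdec hm).trans hn⟩
end

section
/- Let X and Y be compact Hausdorff spaces and let x₀ ∈ X and y₀ ∈ Y be non-isolated points. Then the following are equivalent: (i) there exist sequences (U_n)_{n=1}^∞ and (V_n)_{n=1}^∞ of nonempty functionally open sets U_n ⊆ X and V_n ⊆ Y which converge to x₀ and y₀ respectively, and moreover x₀ ∉ U_n and y₀ ∉ V_n for every n ∈ ℕ; (ii) there exists a separately continuous function f : X × Y → ℝ whose set of discontinuity points is exactly {(x₀, y₀)}. -/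
/-- A set `A` is functionally open if it is `g⁻¹((0,1])` for some continuous
`g : X → [0,1]`. -/
def FunctionallyOpen {X : Type*} [TopologicalSpace X] (A : Set X) : Prop :=
  ∃ g : X → ℝ, Continuous g ∧ (∀ x, g x ∈ Set.Icc (0 : ℝ) 1) ∧
    A = g ⁻¹' Set.Ioc (0 : ℝ) 1

open Filter Topology

lemma aux_fo {X : Type*} [TopologicalSpace X] {φ : X → ℝ} (hφ : Continuous φ)
    (c : ℝ) : FunctionallyOpen {x | c < φ x} := by
  refine ⟨fun x => min 1 (max 0 (φ x - c)), ?_, ?_, ?_⟩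
  · exact continuous_const.min (continuous_const.max (hφ.sub continuous_const))
  · intro x; exact ⟨le_min zero_le_one (le_max_left _ _), min_le_left _ _⟩
  · ext x
    simp only [Set.mem_setOf_eq, Set.mem_preimage, Set.mem_Ioc, lt_min_iff, lt_max_iff]
    constructor
    · intro h; exact ⟨⟨one_pos, Or.inr (by linarith)⟩, min_le_left _ _⟩
    · rintro ⟨⟨-, h⟩, -⟩
      rcases h with h | h
      · exact absurd h (lt_irrefl 0)
      · linarith

lemma aux_tube {X Y : Type*} [TopologicalSpace X] [TopologicalSpace Y]
    {F : X × Y → ℝ} {K : Set X} {y₀ : Y} {c : ℝ} (hK : IsCompact K)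
    (hcont : ∀ x ∈ K, ContinuousAt F (x, y₀)) (hzero : ∀ x ∈ K, F (x, y₀) = 0)
    (hc : 0 < c) : ∃ O ∈ 𝓝 y₀, ∀ x ∈ K, ∀ y ∈ O, |F (x, y)| < c := by
  have key : ∀ x ∈ K, ∃ A ∈ 𝓝 x, ∃ B ∈ 𝓝 y₀, ∀ q ∈ A ×ˢ B, |F q| < c := by
    intro x hx
    have h1 : {t : ℝ | |t| < c} ∈ 𝓝 (F (x, y₀)) := by
      rw [hzero x hx]
      exact (isOpen_lt continuous_abs continuous_const).mem_nhds (by simpa using hc)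
    have h2 : F ⁻¹' {t : ℝ | |t| < c} ∈ 𝓝 (x, y₀) := (hcont x hx) h1
    rw [nhds_prod_eq] at h2
    obtain ⟨A, hA, B, hB, hAB⟩ := Filter.mem_prod_iff.mp h2
    exact ⟨A, hA, B, hB, fun q hq => hAB hq⟩
  choose! A hA B hB hABc using key
  obtain ⟨t, htK, ht⟩ := hK.elim_nhds_subcover A (fun x hx => hA x hx)
  refine ⟨⋂ x ∈ t, B x, ?_, ?_⟩
  · exact (Filter.biInter_finset_mem t).mpr fun x hx => hB x (htK x hx)
  · intro x hx y hy
    obtain ⟨z, hz, hxz⟩ := Set.mem_iUnion₂.mp (ht hx)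
    have hzK := htK z hz
    have hyB : y ∈ B z := Set.mem_iInter₂.mp hy z hz
    exact hABc z hzK (x, y) ⟨hxz, hyB⟩

lemma aux_cluster_mem {Z : Type*} [TopologicalSpace Z] {p : ℕ → Z} {q : Z}
    (hq : ClusterPt q (Filter.map p Filter.atTop)) {g : Z → ℝ} (hg : ContinuousAt g q)
    {S : Set ℝ} (hS : IsClosed S) (hev : ∀ᶠ n in Filter.atTop, g (p n) ∈ S) : g q ∈ S := by
  have h1 : (𝓝 q ⊓ Filter.map p Filter.atTop).NeBot := hq
  have h2 : Filter.map g (𝓝 q ⊓ Filter.map p Filter.atTop) ≤ 𝓝 (g q) ⊓ 𝓟 S := by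
    refine le_trans Filter.map_inf_le (inf_le_inf hg ?_)
    rw [Filter.map_map]
    exact Filter.le_principal_iff.mpr hev
  have h3 : (𝓝 (g q) ⊓ 𝓟 S).NeBot := (h1.map g).mono h2
  have h4 : ClusterPt (g q) (𝓟 S) := h3
  have := mem_closure_iff_clusterPt.mpr h4
  rwa [hS.closure_eq] at this

lemma aux_cluster_eq {Z : Type*} [TopologicalSpace Z] {p : ℕ → Z} {q : Z}
    (hq : ClusterPt q (Filter.map p Filter.atTop)) {g : Z → ℝ} (hg : ContinuousAt g q)
    {a : ℝ} (hev : Filter.Tendsto (fun n => g (p n)) Filter.atTop (𝓝 a)) : g q = a := by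
  apply eq_of_forall_dist_le
  intro ε hε
  have : g q ∈ Metric.closedBall a ε :=
    aux_cluster_mem hq hg Metric.isClosed_closedBall (hev (Metric.closedBall_mem_nhds a hε))
  simpa [Metric.mem_closedBall] using this


theorem fwd_dir {X Y : Type*}
    [TopologicalSpace X] [CompactSpace X] [T2Space X]
    [TopologicalSpace Y] [CompactSpace Y] [T2Space Y]
    (x₀ : X) (y₀ : Y) :
    (∃ (U : ℕ → Set X) (V : ℕ → Set Y),
      (∀ n, FunctionallyOpen (U n)) ∧ (∀ n, (U n).Nonempty) ∧
      (∀ n, FunctionallyOpen (V n)) ∧ (∀ n, (V n).Nonempty) ∧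
      SeqConvergesTo U x₀ ∧ SeqConvergesTo V y₀ ∧
      (∀ n, x₀ ∉ U n) ∧ (∀ n, y₀ ∉ V n)) →
    (∃ f : X × Y → ℝ, SeparatelyContinuous f ∧
      {p : X × Y | ¬ ContinuousAt f p} = {(x₀, y₀)}) := by
  rintro ⟨U, V, hUo, hUne, hVo, hVne, hUc, hVc, hxU, hyV⟩
  choose g hgc hgm hgU using hUo
  choose h hhc hhm hhV using hVo
  choose xs hxs using hUne
  choose ys hys using hVne
  have hg0 : ∀ n x, x ∉ U n → g n x = 0 := by
    intro n x hx
    rcases hgm n x with ⟨h0, h1⟩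
    by_contra hne
    apply hx
    rw [hgU n]
    exact ⟨lt_of_le_of_ne h0 (Ne.symm hne), h1⟩
  have hh0 : ∀ n y, y ∉ V n → h n y = 0 := by
    intro n y hy
    rcases hhm n y with ⟨h0, h1⟩
    by_contra hne
    apply hy
    rw [hhV n]
    exact ⟨lt_of_le_of_ne h0 (Ne.symm hne), h1⟩
  have hapos : ∀ n, 0 < g n (xs n) := by
    intro n
    have := hxs n
    rw [hgU n] at this
    exact this.1
  have hbpos : ∀ n, 0 < h n (ys n) := by
    intro n
    have := hys n
    rw [hhV n] at this
    exact this.1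
  set Fn : ℕ → X × Y → ℝ :=
    fun n p => min (g n p.1 / g n (xs n)) 1 * min (h n p.2 / h n (ys n)) 1 with hFn
  have hFnc : ∀ n, Continuous (Fn n) := by
    intro n
    exact ((((hgc n).comp continuous_fst).div_const _).min continuous_const).mul
      ((((hhc n).comp continuous_snd).div_const _).min continuous_const)
  have hFnnonneg : ∀ n p, 0 ≤ Fn n p := by
    intro n p
    apply mul_nonneg
    · exact le_min (div_nonneg (hgm n p.1).1 (hapos n).le) zero_le_one
    · exact le_min (div_nonneg (hhm n p.2).1 (hbpos n).le) zero_le_one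
  have hFnx₀ : ∀ n (p : X × Y), g n p.1 = 0 → Fn n p = 0 := by
    intro n p hp
    simp [hFn, hp]
  have hFny₀ : ∀ n (p : X × Y), h n p.2 = 0 → Fn n p = 0 := by
    intro n p hp
    simp [hFn, hp]
  have hloc : ∀ x : X, x ≠ x₀ → ∃ n₀ : ℕ, ∃ W' : Set X, IsOpen W' ∧ x ∈ W' ∧
      ∀ x' ∈ W', ∀ n ≥ n₀, g n x' = 0 := by
    intro x hx
    obtain ⟨W', W, hW'o, hWo, hxW', hx₀W, hdisj⟩ := t2_separation hx
    obtain ⟨n₀, hn₀⟩ := hUc W (hWo.mem_nhds hx₀W)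
    exact ⟨n₀, W', hW'o, hxW', fun x' hx' n hn => hg0 n x' fun hmem =>
      (Set.disjoint_left.mp hdisj hx') (hn₀ n hn hmem)⟩
  have hlocY : ∀ y : Y, y ≠ y₀ → ∃ n₀ : ℕ, ∃ W' : Set Y, IsOpen W' ∧ y ∈ W' ∧
      ∀ y' ∈ W', ∀ n ≥ n₀, h n y' = 0 := by
    intro y hy
    obtain ⟨W', W, hW'o, hWo, hyW', hy₀W, hdisj⟩ := t2_separation hy
    obtain ⟨n₀, hn₀⟩ := hVc W (hWo.mem_nhds hy₀W)
    exact ⟨n₀, W', hW'o, hyW', fun y' hy' n hn => hh0 n y' fun hmem =>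
      (Set.disjoint_left.mp hdisj hy') (hn₀ n hn hmem)⟩
  have hsum : ∀ p : X × Y, Summable fun n => Fn n p := by
    intro p
    by_cases hp : p.1 = x₀
    · refine summable_of_ne_finset_zero (s := ∅) fun n _ => hFnx₀ n p ?_
      rw [hp]; exact hg0 n x₀ (hxU n)
    · obtain ⟨n₀, W', _, hxW', hz⟩ := hloc p.1 hp
      refine summable_of_ne_finset_zero (s := Finset.range n₀) fun n hn => hFnx₀ n p ?_
      exact hz p.1 hxW' n (by simp [Finset.mem_range] at hn; omega)
  set f : X × Y → ℝ := fun p => ∑' n, Fn n p with hf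
  have hfx₀ : ∀ y, f (x₀, y) = 0 := by
    intro y
    have hzero : ∀ n, Fn n (x₀, y) = 0 := fun n => hFnx₀ n _ (hg0 n x₀ (hxU n))
    exact (tsum_congr hzero).trans tsum_zero
  have hfy₀ : ∀ x, f (x, y₀) = 0 := by
    intro x
    have hzero : ∀ n, Fn n (x, y₀) = 0 := fun n => hFny₀ n _ (hh0 n y₀ (hyV n))
    exact (tsum_congr hzero).trans tsum_zero
  have hcont : ∀ p : X × Y, p ≠ (x₀, y₀) → ContinuousAt f p := by
    intro p hp
    have hcase : p.1 ≠ x₀ ∨ p.2 ≠ y₀ := by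
      by_contra hcon
      push_neg at hcon
      exact hp (Prod.ext hcon.1 hcon.2)
    rcases hcase with hx | hy
    · obtain ⟨n₀, W', hW'o, hxW', hz⟩ := hloc p.1 hx
      have hN : W' ×ˢ (Set.univ : Set Y) ∈ 𝓝 p := prod_mem_nhds (hW'o.mem_nhds hxW') Filter.univ_mem
      have heq : ∀ q ∈ W' ×ˢ (Set.univ : Set Y), f q = ∑ n ∈ Finset.range n₀, Fn n q := by
        intro q hq
        exact tsum_eq_sum fun n hn => hFnx₀ n q (hz q.1 hq.1 n (by simp [Finset.mem_range] at hn; omega))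
      have hcs : ContinuousAt (fun q => ∑ n ∈ Finset.range n₀, Fn n q) p :=
        (continuous_finset_sum _ fun n _ => hFnc n).continuousAt
      exact hcs.congr (Filter.eventuallyEq_of_mem hN fun q hq => (heq q hq).symm)
    · obtain ⟨n₀, W', hW'o, hyW', hz⟩ := hlocY p.2 hy
      have hN : (Set.univ : Set X) ×ˢ W' ∈ 𝓝 p := prod_mem_nhds Filter.univ_mem (hW'o.mem_nhds hyW')
      have heq : ∀ q ∈ (Set.univ : Set X) ×ˢ W', f q = ∑ n ∈ Finset.range n₀, Fn n q := by
        intro q hq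
        exact tsum_eq_sum fun n hn => hFny₀ n q (hz q.2 hq.2 n (by simp [Finset.mem_range] at hn; omega))
      have hcs : ContinuousAt (fun q => ∑ n ∈ Finset.range n₀, Fn n q) p :=
        (continuous_finset_sum _ fun n _ => hFnc n).continuousAt
      exact hcs.congr (Filter.eventuallyEq_of_mem hN fun q hq => (heq q hq).symm)
  have hfne : ¬ ContinuousAt f (x₀, y₀) := by
    intro hc
    have hmem : f ⁻¹' Set.Iio (1 : ℝ) ∈ 𝓝 (x₀, y₀) := by
      apply hc.preimage_mem_nhds
      rw [hfx₀ y₀]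
      exact isOpen_Iio.mem_nhds (by norm_num)
    rw [nhds_prod_eq] at hmem
    obtain ⟨A, hA, B, hB, hAB⟩ := Filter.mem_prod_iff.mp hmem
    obtain ⟨n₁, hn₁⟩ := hUc A hA
    obtain ⟨n₂, hn₂⟩ := hVc B hB
    set n := max n₁ n₂
    have hx : xs n ∈ A := hn₁ n (le_max_left _ _) (hxs n)
    have hy : ys n ∈ B := hn₂ n (le_max_right _ _) (hys n)
    have hlt : f (xs n, ys n) < 1 := hAB (Set.mk_mem_prod hx hy)
    have hFnn : Fn n (xs n, ys n) = 1 := by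
      simp [hFn, div_self (ne_of_gt (hapos n)), div_self (ne_of_gt (hbpos n))]
    have hge : (1 : ℝ) ≤ f (xs n, ys n) := by
      calc (1 : ℝ) = Fn n (xs n, ys n) := hFnn.symm
      _ ≤ f (xs n, ys n) := Summable.le_tsum (hsum _) n fun m _ => hFnnonneg m _
    linarith
  refine ⟨f, ⟨?_, ?_⟩, ?_⟩
  · intro x
    by_cases hx : x = x₀
    · rw [hx]
      have : (fun y => f (x₀, y)) = fun _ => (0 : ℝ) := funext hfx₀
      rw [this]; exact continuous_const
    · rw [continuous_iff_continuousAt]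
      intro y
      have h1 : ContinuousAt f (x, y) := hcont (x, y) (fun hq => hx (congrArg Prod.fst hq))
      exact ContinuousAt.comp (f := fun y' : Y => (x, y')) h1 (continuousAt_const.prodMk continuousAt_id)
  · intro y
    by_cases hy : y = y₀
    · rw [hy]
      have : (fun x => f (x, y₀)) = fun _ => (0 : ℝ) := funext hfy₀
      rw [this]; exact continuous_const
    · rw [continuous_iff_continuousAt]
      intro x
      have h1 : ContinuousAt f (x, y) := hcont (x, y) (fun hq => hy (congrArg Prod.snd hq))
      exact ContinuousAt.comp (f := fun x' : X => (x', y)) h1 (continuousAt_id.prodMk continuousAt_const)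
  · ext p
    simp only [Set.mem_setOf_eq, Set.mem_singleton_iff]
    constructor
    · intro hnc
      by_contra hne
      exact hnc (hcont p hne)
    · intro hp
      rw [hp]
      exact hfne

theorem bwd_dir {X Y : Type*}
    [TopologicalSpace X] [CompactSpace X] [T2Space X]
    [TopologicalSpace Y] [CompactSpace Y] [T2Space Y]
    (x₀ : X) (y₀ : Y) :
    (∃ f : X × Y → ℝ, SeparatelyContinuous f ∧
      {p : X × Y | ¬ ContinuousAt f p} = {(x₀, y₀)}) →
    (∃ (U : ℕ → Set X) (V : ℕ → Set Y),
      (∀ n, FunctionallyOpen (U n)) ∧ (∀ n, (U n).Nonempty) ∧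
      (∀ n, FunctionallyOpen (V n)) ∧ (∀ n, (V n).Nonempty) ∧
      SeqConvergesTo U x₀ ∧ SeqConvergesTo V y₀ ∧
      (∀ n, x₀ ∉ U n) ∧ (∀ n, y₀ ∉ V n)) := by
  rintro ⟨f, ⟨hsec1, hsec2⟩, hset⟩
  have hfdisc : ¬ ContinuousAt f (x₀, y₀) := by
    have : (x₀, y₀) ∈ {p : X × Y | ¬ ContinuousAt f p} := by rw [hset]; rfl
    exact this
  have hfc : ∀ p : X × Y, p ≠ (x₀, y₀) → ContinuousAt f p := by
    intro p hp
    by_contra hc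
    apply hp
    have : p ∈ ({(x₀, y₀)} : Set (X × Y)) := hset ▸ hc
    exact this
  set F : X × Y → ℝ := fun p => f p - f (p.1, y₀) - f (x₀, p.2) + f (x₀, y₀) with hF
  have hc1 : Continuous fun p : X × Y => f (p.1, y₀) := (hsec2 y₀).comp continuous_fst
  have hc2 : Continuous fun p : X × Y => f (x₀, p.2) := (hsec1 x₀).comp continuous_snd
  have hFc : ∀ p : X × Y, p ≠ (x₀, y₀) → ContinuousAt F p := by
    intro p hp
    exact (((hfc p hp).sub hc1.continuousAt).sub hc2.continuousAt).add continuousAt_const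
  have hFx : ∀ y, F (x₀, y) = 0 := by intro y; simp only [hF]; ring
  have hFy : ∀ x, F (x, y₀) = 0 := by intro x; simp only [hF]; ring
  have hFsecx : ∀ y, Continuous fun x => F (x, y) := by
    intro y
    simp only [hF]
    exact (((hsec2 y).sub (hsec2 y₀)).sub continuous_const).add continuous_const
  have hFsecy : ∀ x, Continuous fun y => F (x, y) := by
    intro x
    simp only [hF]
    exact (((hsec1 x).sub continuous_const).sub (hsec1 x₀)).add continuous_const
  have hFdisc : ¬ ContinuousAt F (x₀, y₀) := by
    intro hc
    apply hfdisc
    have hfeq : f = fun p : X × Y => F p + f (p.1, y₀) + f (x₀, p.2) - f (x₀, y₀) := by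
      funext p; simp only [hF]; ring
    rw [hfeq]
    exact ((hc.add hc1.continuousAt).add hc2.continuousAt).sub continuousAt_const
  have hF00 : F (x₀, y₀) = 0 := hFx y₀
  obtain ⟨ε, hε, hfreq⟩ : ∃ ε > 0, ∀ N ∈ 𝓝 (x₀, y₀), ∃ q ∈ N, ε ≤ |F q| := by
    have h1 : ¬ Filter.Tendsto F (𝓝 (x₀, y₀)) (𝓝 0) := by
      rw [← hF00]; exact hFdisc
    rw [Metric.tendsto_nhds] at h1
    push_neg at h1
    obtain ⟨ε, hε, h2⟩ := h1
    refine ⟨ε, hε, ?_⟩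
    intro N hN
    obtain ⟨q, hqN, hq⟩ := Filter.frequently_iff.mp h2 hN
    refine ⟨q, hqN, ?_⟩
    rw [Real.dist_eq, sub_zero] at hq
    exact hq
  have key : ∀ (n : ℕ) (l : List (X × Y)), ∃ q : X × Y, ε ≤ |F q| ∧
      ∀ z ∈ l, |F (q.1, z.2)| < 1 / (n + 1) := by
    intro n l
    have hpos : (0 : ℝ) < 1 / (n + 1) := by positivity
    have hopen : IsOpen {x : X | ∀ z ∈ l, |F (x, z.2)| < 1 / (n + 1)} ∧
        x₀ ∈ {x : X | ∀ z ∈ l, |F (x, z.2)| < 1 / (n + 1)} := by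
      induction l with
      | nil => simpa using isOpen_univ
      | cons a t ih =>
        have hseteq : {x : X | ∀ z ∈ a :: t, |F (x, z.2)| < 1 / (n + 1)} =
            {x : X | |F (x, a.2)| < 1 / (n + 1)} ∩
              {x : X | ∀ z ∈ t, |F (x, z.2)| < 1 / (n + 1)} := by
          ext x
          simp only [Set.mem_setOf_eq, List.mem_cons, Set.mem_inter_iff]
          constructor
          · intro hx; exact ⟨hx a (Or.inl rfl), fun z hz => hx z (Or.inr hz)⟩
          · rintro ⟨h1, h2⟩ z (rfl | hz)
            · exact h1
            · exact h2 z hz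
        rw [hseteq]
        constructor
        · exact (isOpen_lt ((hFsecx a.2).abs) continuous_const).inter ih.1
        · exact ⟨by simp only [Set.mem_setOf_eq, hFx a.2, abs_zero]; positivity, ih.2⟩
    obtain ⟨ho, hx0⟩ := hopen
    have hN : ({x : X | ∀ z ∈ l, |F (x, z.2)| < 1 / (n + 1)} ×ˢ (Set.univ : Set Y)) ∈
        𝓝 (x₀, y₀) := prod_mem_nhds (ho.mem_nhds hx0) Filter.univ_mem
    obtain ⟨q, hqN, hq⟩ := hfreq _ hN
    exact ⟨q, hq, fun z hz => hqN.1 z hz⟩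
  obtain ⟨L, hL0, hLs⟩ : ∃ L : ℕ → List (X × Y), L 0 = [] ∧
      ∀ n, L (n + 1) = L n ++ [Classical.choose (key n (L n))] :=
    ⟨fun n => Nat.rec [] (fun n ln => ln ++ [Classical.choose (key n ln)]) n, rfl, fun n => rfl⟩
  set p : ℕ → X × Y := fun n => Classical.choose (key n (L n)) with hp
  have hspec : ∀ n, ε ≤ |F (p n)| ∧ ∀ z ∈ L n, |F ((p n).1, z.2)| < 1 / (n + 1) :=
    fun n => Classical.choose_spec (key n (L n))
  have hmemL : ∀ k n, k < n → p k ∈ L n := by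
    intro k n hkn
    induction n with
    | zero => omega
    | succ m ih =>
      rw [hLs m]
      rcases Nat.lt_succ_iff_lt_or_eq.mp hkn with hc | hc
      · exact List.mem_append.mpr (Or.inl (ih hc))
      · subst hc; exact List.mem_append.mpr (Or.inr (by simp [hp]))
  have hsmall : ∀ k n, k < n → |F ((p n).1, (p k).2)| < 1 / (n + 1) :=
    fun k n hk => (hspec n).2 (p k) (hmemL k n hk)
  have huniq : ∀ q : X × Y, ClusterPt q (Filter.map p Filter.atTop) → q = (x₀, y₀) := by
    intro q hq
    by_contra hne
    have hstep1 : ∀ k, F (q.1, (p k).2) = 0 := by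
      intro k
      have hgc : Continuous fun r : X × Y => F (r.1, (p k).2) :=
        (hFsecx (p k).2).comp continuous_fst
      apply aux_cluster_eq hq hgc.continuousAt
      apply squeeze_zero_norm'
      · refine Filter.eventually_atTop.mpr ⟨k + 1, fun n hn => ?_⟩
        exact le_trans (le_of_lt (hsmall k n (by omega))) le_rfl
      · exact tendsto_one_div_add_atTop_nhds_zero_nat
    have hq0 : F q = 0 := by
      have hgc : Continuous fun r : X × Y => F (q.1, r.2) := (hFsecy q.1).comp continuous_snd
      have heq : (fun n => F (q.1, (p n).2)) = fun _ => (0 : ℝ) := funext hstep1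
      have := aux_cluster_eq hq hgc.continuousAt (a := 0) (by rw [heq]; exact tendsto_const_nhds)
      exact this
    have hqe : ε ≤ |F q| := by
      have hgc : ContinuousAt (fun r => |F r|) q := (hFc q hne).abs
      exact aux_cluster_mem hq hgc (S := Set.Ici ε) isClosed_Ici
        (Filter.Eventually.of_forall fun n => (hspec n).1)
    rw [hq0] at hqe
    simp at hqe
    linarith
  have htend : Filter.Tendsto p Filter.atTop (𝓝 (x₀, y₀)) := by
    by_contra hnt
    rw [Filter.tendsto_def] at hnt
    push_neg at hnt
    obtain ⟨N, hN, hnN⟩ := hnt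
    set N' := interior N with hN'
    have hN'o : IsOpen N' := isOpen_interior
    have hpN' : (x₀, y₀) ∈ N' := mem_interior_iff_mem_nhds.mpr hN
    have hfreq' : ∀ Uu ∈ Filter.map p Filter.atTop, (Uu ∩ N'ᶜ).Nonempty := by
      intro Uu hU
      by_contra hNE
      rw [Set.not_nonempty_iff_eq_empty] at hNE
      apply hnN
      have hsub : Uu ⊆ N := by
        intro z hz
        apply interior_subset (s := N)
        by_contra hzN
        exact absurd hNE (Set.nonempty_iff_ne_empty.mp ⟨z, hz, hzN⟩)
      exact Filter.mem_of_superset (Filter.mem_map.mp hU) fun n hn => hsub hn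
    have hNB : (Filter.map p Filter.atTop ⊓ 𝓟 N'ᶜ).NeBot :=
      Filter.inf_principal_neBot_iff.mpr hfreq'
    obtain ⟨q, -, hcl⟩ := isCompact_univ.exists_clusterPt
      (f := Filter.map p Filter.atTop ⊓ 𝓟 N'ᶜ) (Filter.le_principal_iff.mpr Filter.univ_mem)
    have hq1 : ClusterPt q (Filter.map p Filter.atTop) := hcl.mono inf_le_left
    have hq2 : q ∈ closure N'ᶜ := mem_closure_iff_clusterPt.mpr (hcl.mono inf_le_right)
    rw [hN'o.isClosed_compl.closure_eq] at hq2
    exact hq2 (huniq q hq1 ▸ hpN')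
  have hxtend : Filter.Tendsto (fun n => (p n).1) Filter.atTop (𝓝 x₀) :=
    (continuous_fst.tendsto (x₀, y₀)).comp htend
  have hytend : Filter.Tendsto (fun n => (p n).2) Filter.atTop (𝓝 y₀) :=
    (continuous_snd.tendsto (x₀, y₀)).comp htend
  have hc2pos : (0 : ℝ) < ε / 2 := half_pos hε
  refine ⟨fun n => {x | ε / 2 < |F (x, (p n).2)|}, fun n => {y | ε / 2 < |F ((p n).1, y)|},
    ?_, ?_, ?_, ?_, ?_, ?_, ?_, ?_⟩
  · intro n; exact aux_fo ((hFsecx (p n).2).abs) (ε / 2)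
  · intro n
    refine ⟨(p n).1, ?_⟩
    show ε / 2 < |F ((p n).1, (p n).2)|
    calc ε / 2 < ε := half_lt_self hε
    _ ≤ |F (p n)| := (hspec n).1
  · intro n; exact aux_fo ((hFsecy (p n).1).abs) (ε / 2)
  · intro n
    refine ⟨(p n).2, ?_⟩
    show ε / 2 < |F ((p n).1, (p n).2)|
    calc ε / 2 < ε := half_lt_self hε
    _ ≤ |F (p n)| := (hspec n).1
  · -- SeqConvergesTo U x₀
    intro W hW
    obtain ⟨W', hW'sub, hW'o, hx₀W'⟩ := mem_nhds_iff.mp hW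
    have hKcomp : IsCompact (W'ᶜ) := hW'o.isClosed_compl.isCompact
    have hKc : ∀ x ∈ W'ᶜ, ContinuousAt F (x, y₀) := by
      intro x hx
      apply hFc
      intro hcc
      apply hx
      have h1 : x = x₀ := congrArg Prod.fst hcc
      rw [h1]; exact hx₀W'
    obtain ⟨O, hO, hOc⟩ := aux_tube hKcomp hKc (fun x _ => hFy x) hc2pos
    obtain ⟨n₀, hn₀⟩ := Filter.eventually_atTop.mp (hytend hO)
    refine ⟨n₀, fun n hn x hx => ?_⟩
    by_contra hxW
    have hxK : x ∈ W'ᶜ := fun hxW' => hxW (hW'sub hxW')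
    have hlt := hOc x hxK (p n).2 (hn₀ n hn)
    exact absurd hx (not_lt.mpr hlt.le)
  · -- SeqConvergesTo V y₀
    intro W hW
    obtain ⟨W', hW'sub, hW'o, hy₀W'⟩ := mem_nhds_iff.mp hW
    have hKcomp : IsCompact (W'ᶜ) := hW'o.isClosed_compl.isCompact
    have hKc : ∀ y ∈ W'ᶜ, ContinuousAt (fun r : Y × X => F (r.2, r.1)) (y, x₀) := by
      intro y hy
      have h1 : ContinuousAt F (x₀, y) := by
        apply hFc
        intro hcc
        apply hy
        have h2 : y = y₀ := congrArg Prod.snd hcc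
        rw [h2]; exact hy₀W'
      exact ContinuousAt.comp (x := (y, x₀)) (f := fun r : Y × X => (r.2, r.1)) h1
        (continuous_snd.continuousAt.prodMk continuous_fst.continuousAt)
    obtain ⟨O, hO, hOc⟩ := aux_tube hKcomp hKc (fun y _ => hFx y) hc2pos
    obtain ⟨n₀, hn₀⟩ := Filter.eventually_atTop.mp (hxtend hO)
    refine ⟨n₀, fun n hn y hy => ?_⟩
    by_contra hyW
    have hyK : y ∈ W'ᶜ := fun hyW' => hyW (hW'sub hyW')
    have hlt := hOc y hyK (p n).1 (hn₀ n hn)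
    exact absurd hy (not_lt.mpr hlt.le)
  · intro n
    show ¬ (ε / 2 < |F (x₀, (p n).2)|)
    rw [hFx]
    simp
    linarith
  · intro n
    show ¬ (ε / 2 < |F ((p n).1, y₀)|)
    rw [hFy]
    simp
    linarith

/-- for compact Hausdorff spaces `X`, `Y` and non-isolated points
`x₀ ∈ X`, `y₀ ∈ Y`, the existence of sequences of nonempty functionally open sets
converging to `x₀` and `y₀` (and avoiding them) is equivalent to the existence of a
separately continuous function on `X × Y` with discontinuity set exactly `{(x₀, y₀)}`. -/
theorem onepoint_discontinuity_iff_of_compacts {X Y : Type*}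
    [TopologicalSpace X] [CompactSpace X] [T2Space X]
    [TopologicalSpace Y] [CompactSpace Y] [T2Space Y]
    (x₀ : X) (y₀ : Y) (hx₀ : ¬ IsOpen ({x₀} : Set X)) (hy₀ : ¬ IsOpen ({y₀} : Set Y)) :
    (∃ (U : ℕ → Set X) (V : ℕ → Set Y),
      (∀ n, FunctionallyOpen (U n)) ∧ (∀ n, (U n).Nonempty) ∧
      (∀ n, FunctionallyOpen (V n)) ∧ (∀ n, (V n).Nonempty) ∧
      SeqConvergesTo U x₀ ∧ SeqConvergesTo V y₀ ∧
      (∀ n, x₀ ∉ U n) ∧ (∀ n, y₀ ∉ V n)) ↔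
    (∃ f : X × Y → ℝ, SeparatelyContinuous f ∧
      {p : X × Y | ¬ ContinuousAt f p} = {(x₀, y₀)}) :=
  ⟨fwd_dir x₀ y₀, bwd_dir x₀ y₀⟩
end

section
/- Let X and Y be compact Hausdorff spaces, x₀ ∈ X and y₀ ∈ Y non-isolated points, and suppose there exists a separately continuous function f : X × Y → ℝ whose set of discontinuity points is exactly {(x₀, y₀)}. Then there exist sequences (U_n)_{n=1}^∞ and (V_n)_{n=1}^∞ of nonempty functionally open sets U_n ⊆ X and V_n ⊆ Y which converge to x₀ and y₀ respectively, with x₀ ∉ U_n and y₀ ∉ V_n for every n ∈ ℕ. -/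
/-- A strict superlevel set of a continuous real function is functionally open. -/
lemma funOpen_of_continuous_lt {X : Type*} [TopologicalSpace X] {h : X → ℝ}
    (hc : Continuous h) (ε : ℝ) : FunctionallyOpen {x | ε < h x} := by
  refine ⟨fun x => max 0 (min 1 (h x - ε)), ?_, ?_, ?_⟩
  · exact continuous_const.max (continuous_const.min (hc.sub continuous_const))
  · intro x
    exact ⟨le_max_left _ _, max_le zero_le_one (min_le_left _ _)⟩
  · ext x
    simp only [Set.mem_setOf_eq, Set.mem_preimage, Set.mem_Ioc]
    constructor
    · intro hx
      exact ⟨lt_max_iff.2 (Or.inr (lt_min one_pos (by linarith))),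
        max_le zero_le_one (min_le_left _ _)⟩
    · rintro ⟨h1, -⟩
      rcases lt_max_iff.1 h1 with h' | h'
      · exact absurd h' (lt_irrefl _)
      · have := (lt_min_iff.1 h').2
        linarith

/-- Compactness half: if `f` (on `X × Y`) is "jointly continuous relative to the section
at `y₀`" at all points `(x, y₀)` with `x ≠ x₀`, and `y n → y₀`, then the sets
`{x | ε < |f (x, y n) - f (x, y₀)|}` converge to `x₀`. -/
lemma seqConv_aux {X Y : Type*} [TopologicalSpace X] [CompactSpace X] [TopologicalSpace Y]
    (f : X × Y → ℝ) (x₀ : X) (y₀ : Y) {ε : ℝ} (hε : 0 < ε)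
    (hc : ∀ x : X, x ≠ x₀ → ContinuousAt (fun z : X × Y => f z - f (z.1, y₀)) (x, y₀))
    (y : ℕ → Y) (hy : Filter.Tendsto y Filter.atTop (nhds y₀)) :
    SeqConvergesTo (fun n => {x | ε < |f (x, y n) - f (x, y₀)|}) x₀ := by
  intro S hS
  obtain ⟨O, hOS, hOopen, hx₀O⟩ := mem_nhds_iff.1 hS
  have hK : IsCompact Oᶜ := hOopen.isClosed_compl.isCompact
  have key : ∀ x ∈ Oᶜ, ∃ P : Set X × Set Y, P.1 ∈ nhds x ∧ P.2 ∈ nhds y₀ ∧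
      ∀ z ∈ P.1 ×ˢ P.2, |f z - f (z.1, y₀)| < ε := by
    intro x hx
    have hxne : x ≠ x₀ := fun h => hx (h ▸ hx₀O)
    have ht : Filter.Tendsto (fun z : X × Y => f z - f (z.1, y₀)) (nhds (x, y₀))
        (nhds (f (x, y₀) - f (x, y₀))) := hc x hxne
    rw [sub_self] at ht
    have hnb := ht (Metric.ball_mem_nhds 0 hε)
    have hnb' : {z : X × Y | |f z - f (z.1, y₀)| < ε} ∈ nhds (x, y₀) := by
      refine Filter.mem_of_superset hnb ?_
      intro z hz
      simpa [Real.dist_eq] using hz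
    obtain ⟨A, hA, B, hB, hAB⟩ := mem_nhds_prod_iff.1 hnb'
    exact ⟨(A, B), hA, hB, fun z hz => hAB hz⟩
  choose! P hP1 hP2 hP3 using key
  obtain ⟨t, htK, hcover⟩ := hK.elim_nhds_subcover (fun x => (P x).1) (fun x hx => hP1 x hx)
  have hW : (⋂ x ∈ t, (P x).2) ∈ nhds y₀ :=
    (Filter.biInter_finset_mem t).2 fun x hx => hP2 x (htK x hx)
  obtain ⟨n₀, hn₀⟩ := Filter.mem_atTop_sets.1 (Filter.mem_map.1 (hy hW))
  refine ⟨n₀, fun n hn x' hx' => ?_⟩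
  refine hOS ?_
  by_contra hx'O
  obtain ⟨x, hxt, hx'P⟩ := Set.mem_iUnion₂.1 (hcover hx'O)
  have hyW : y n ∈ (P x).2 := Set.mem_iInter₂.1 (hn₀ n hn) x hxt
  have hlt : |f (x', y n) - f (x', y₀)| < ε := hP3 x (htK x hxt) (x', y n) ⟨hx'P, hyW⟩
  have hgt : ε < |f (x', y n) - f (x', y₀)| := hx'
  linarith

/-- if `X`, `Y` are compact Hausdorff, `x₀ ∈ X`, `y₀ ∈ Y` are
non-isolated and some separately continuous `f : X × Y → ℝ` has discontinuity set
exactly `{(x₀, y₀)}`, then there exist sequences of nonempty functionally open sets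
converging to `x₀` and `y₀` respectively and avoiding them. -/
theorem exists_funOpen_seq_of_onepoint_discontinuity_compacts {X Y : Type*}
    [TopologicalSpace X] [CompactSpace X] [T2Space X]
    [TopologicalSpace Y] [CompactSpace Y] [T2Space Y]
    (x₀ : X) (y₀ : Y) (hx₀ : ¬ IsOpen ({x₀} : Set X)) (hy₀ : ¬ IsOpen ({y₀} : Set Y))
    (f : X × Y → ℝ) (hf : SeparatelyContinuous f)
    (hD : {p : X × Y | ¬ ContinuousAt f p} = {(x₀, y₀)}) :
    ∃ (U : ℕ → Set X) (V : ℕ → Set Y),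
      (∀ n, FunctionallyOpen (U n)) ∧ (∀ n, (U n).Nonempty) ∧
      (∀ n, FunctionallyOpen (V n)) ∧ (∀ n, (V n).Nonempty) ∧
      SeqConvergesTo U x₀ ∧ SeqConvergesTo V y₀ ∧
      (∀ n, x₀ ∉ U n) ∧ (∀ n, y₀ ∉ V n) := by
  classical
  set c : ℝ := f (x₀, y₀) with hcdef
  have hdisc : ¬ ContinuousAt f (x₀, y₀) := by
    have : (x₀, y₀) ∈ {p : X × Y | ¬ ContinuousAt f p} := by rw [hD]; rfl
    exact this
  have hcont : ∀ q : X × Y, q ≠ (x₀, y₀) → ContinuousAt f q := by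
    intro q hq
    by_contra h
    exact hq (by have : q ∈ ({(x₀, y₀)} : Set (X × Y)) := hD ▸ h; exact this)
  obtain ⟨ε₀, hε₀, hfreq⟩ : ∃ ε₀ > 0, ∀ W ∈ nhds (x₀, y₀), ∃ z ∈ W, ε₀ ≤ |f z - c| := by
    by_contra h
    push_neg at h
    apply hdisc
    rw [ContinuousAt, Metric.tendsto_nhds]
    intro δ hδ
    obtain ⟨W, hW, hb⟩ := h δ hδ
    filter_upwards [hW] with z hz
    rw [Real.dist_eq]
    exact hb z hz
  set ε : ℝ := ε₀ / 3 with hεdef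
  have hε : 0 < ε := by positivity
  set U₀ : Set X := {x | |f (x, y₀) - c| < ε} with hU₀def
  set V₀ : Set Y := {y | |f (x₀, y) - c| < ε} with hV₀def
  have hU₀open : IsOpen U₀ := isOpen_lt ((hf.2 y₀).sub continuous_const).abs continuous_const
  have hV₀open : IsOpen V₀ := isOpen_lt ((hf.1 x₀).sub continuous_const).abs continuous_const
  have hx₀U₀ : x₀ ∈ U₀ := by simp [hU₀def, hcdef, hε]
  have hy₀V₀ : y₀ ∈ V₀ := by simp [hV₀def, hcdef, hε]
  obtain ⟨q, hq, hr⟩ := exists_seq_of_forall_finset_exists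
    (fun z : X × Y => z ∈ U₀ ×ˢ V₀ ∧ 3 * ε ≤ |f z - c|)
    (fun z w => |f (z.1, w.2) - f (z.1, y₀)| < ε)
    (by
      intro s _
      have hWs : (V₀ ∩ ⋂ z ∈ s, {y | |f (z.1, y) - f (z.1, y₀)| < ε}) ∈ nhds y₀ := by
        refine Filter.inter_mem (hV₀open.mem_nhds hy₀V₀) ?_
        refine (Filter.biInter_finset_mem s).2 fun z hz => ?_
        have ho : IsOpen {y | |f (z.1, y) - f (z.1, y₀)| < ε} :=
          isOpen_lt ((hf.1 z.1).sub continuous_const).abs continuous_const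
        exact ho.mem_nhds (by simp [hε])
      have hW2 : U₀ ×ˢ (V₀ ∩ ⋂ z ∈ s, {y | |f (z.1, y) - f (z.1, y₀)| < ε}) ∈ nhds (x₀, y₀) :=
        prod_mem_nhds (hU₀open.mem_nhds hx₀U₀) hWs
      obtain ⟨w, hwW, hwε⟩ := hfreq _ hW2
      refine ⟨w, ⟨⟨hwW.1, hwW.2.1⟩, by rw [hεdef]; linarith⟩, fun z hz => ?_⟩
      exact Set.mem_iInter₂.1 hwW.2.2 z hz)
  have hqx : ∀ n, |f ((q n).1, y₀) - c| < ε := fun n => (hq n).1.1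
  have hqy : ∀ n, |f (x₀, (q n).2) - c| < ε := fun n => (hq n).1.2
  have hq3 : ∀ n, 3 * ε ≤ |f (q n) - c| := fun n => (hq n).2
  -- the sequence of points converges to (x₀, y₀)
  have hqtend : Filter.Tendsto q Filter.atTop (nhds (x₀, y₀)) := by
    apply tendsto_nhds_of_unique_mapClusterPt
    rintro ⟨z1, z2⟩ hz
    by_contra hzp
    have hgc : ContinuousAt (fun z : X × Y => f z - f (z.1, y₀)) (z1, z2) :=
      (hcont _ hzp).sub (((hf.2 y₀).comp continuous_fst).continuousAt)
    have hclg : MapClusterPt ((fun z : X × Y => f z - f (z.1, y₀)) (z1, z2)) Filter.atTop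
        ((fun z : X × Y => f z - f (z.1, y₀)) ∘ q) := hz.continuousAt_comp hgc
    have h2ε : ∀ n, 2 * ε ≤ |((fun z : X × Y => f z - f (z.1, y₀)) ∘ q) n| := by
      intro n
      have tri := abs_sub_le (f (q n)) (f ((q n).1, y₀)) c
      have h1 := hq3 n
      have h2 := hqx n
      simp only [Function.comp_apply]
      linarith
    have hgz : 2 * ε ≤ |f (z1, z2) - f (z1, y₀)| := by
      have hmem : {t : ℝ | 2 * ε ≤ |t|} ∈
          Filter.map ((fun z : X × Y => f z - f (z.1, y₀)) ∘ q) Filter.atTop :=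
        Filter.mem_map.2 (Filter.univ_mem' h2ε)
      have hcl := clusterPt_iff_forall_mem_closure.1 hclg _ hmem
      rwa [(isClosed_le continuous_const continuous_abs).closure_eq] at hcl
    have hclx : MapClusterPt z1 Filter.atTop (Prod.fst ∘ q) :=
      hz.continuousAt_comp continuous_fst.continuousAt
    have hcly : MapClusterPt z2 Filter.atTop (Prod.snd ∘ q) :=
      hz.continuousAt_comp continuous_snd.continuousAt
    have hmbound : ∀ m, |f ((q m).1, z2) - f ((q m).1, y₀)| ≤ ε := by
      intro m
      have hφc : ContinuousAt (fun y => f ((q m).1, y) - f ((q m).1, y₀)) z2 :=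
        ((hf.1 _).sub continuous_const).continuousAt
      have hclφ : MapClusterPt ((fun y => f ((q m).1, y) - f ((q m).1, y₀)) z2) Filter.atTop
          ((fun y => f ((q m).1, y) - f ((q m).1, y₀)) ∘ (Prod.snd ∘ q)) :=
        hcly.continuousAt_comp hφc
      have hmem : {t : ℝ | |t| ≤ ε} ∈
          Filter.map ((fun y => f ((q m).1, y) - f ((q m).1, y₀)) ∘ (Prod.snd ∘ q))
            Filter.atTop := by
        rw [Filter.mem_map]
        filter_upwards [Filter.eventually_gt_atTop m] with n hn
        exact le_of_lt (hr m n hn)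
      have hcl := clusterPt_iff_forall_mem_closure.1 hclφ _ hmem
      rwa [(isClosed_le continuous_abs continuous_const).closure_eq] at hcl
    have hψ : |f (z1, z2) - f (z1, y₀)| ≤ ε := by
      have hψc : ContinuousAt (fun x => f (x, z2) - f (x, y₀)) z1 :=
        ((hf.2 z2).sub (hf.2 y₀)).continuousAt
      have hclψ : MapClusterPt ((fun x => f (x, z2) - f (x, y₀)) z1) Filter.atTop
          ((fun x => f (x, z2) - f (x, y₀)) ∘ (Prod.fst ∘ q)) :=
        hclx.continuousAt_comp hψc
      have hmem : {t : ℝ | |t| ≤ ε} ∈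
          Filter.map ((fun x => f (x, z2) - f (x, y₀)) ∘ (Prod.fst ∘ q)) Filter.atTop :=
        Filter.mem_map.2 (Filter.univ_mem' fun m => hmbound m)
      have hcl := clusterPt_iff_forall_mem_closure.1 hclψ _ hmem
      rwa [(isClosed_le continuous_abs continuous_const).closure_eq] at hcl
    linarith
  have hxt : Filter.Tendsto (fun n => (q n).1) Filter.atTop (nhds x₀) :=
    (continuous_fst.tendsto (x₀, y₀)).comp hqtend
  have hyt : Filter.Tendsto (fun n => (q n).2) Filter.atTop (nhds y₀) :=
    (continuous_snd.tendsto (x₀, y₀)).comp hqtend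
  -- auxiliary inequalities
  have hUn : ∀ n, ε < |f ((q n).1, (q n).2) - f ((q n).1, y₀)| := by
    intro n
    have tri := abs_sub_le (f (q n)) (f ((q n).1, y₀)) c
    have h1 := hq3 n
    have h2 := hqx n
    have he : f (q n) = f ((q n).1, (q n).2) := by rw [Prod.mk.eta]
    rw [he] at tri h1
    linarith
  have hVn : ∀ n, ε < |f ((q n).1, (q n).2) - f (x₀, (q n).2)| := by
    intro n
    have tri := abs_sub_le (f (q n)) (f (x₀, (q n).2)) c
    have h1 := hq3 n
    have h2 := hqy n
    have he : f (q n) = f ((q n).1, (q n).2) := by rw [Prod.mk.eta]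
    rw [he] at tri h1
    linarith
  refine ⟨fun n => {x | ε < |f (x, (q n).2) - f (x, y₀)|},
          fun n => {y | ε < |f ((q n).1, y) - f (x₀, y)|}, ?_, ?_, ?_, ?_, ?_, ?_, ?_, ?_⟩
  · intro n
    exact funOpen_of_continuous_lt (((hf.2 _).sub (hf.2 y₀)).abs) ε
  · intro n
    exact ⟨(q n).1, hUn n⟩
  · intro n
    exact funOpen_of_continuous_lt (((hf.1 _).sub (hf.1 x₀)).abs) ε
  · intro n
    exact ⟨(q n).2, hVn n⟩
  · -- SeqConvergesTo U x₀
    have hcX : ∀ x : X, x ≠ x₀ → ContinuousAt (fun z : X × Y => f z - f (z.1, y₀)) (x, y₀) := by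
      intro x hx
      exact (hcont _ (by simp [Prod.ext_iff, hx])).sub
        (((hf.2 y₀).comp continuous_fst).continuousAt)
    exact seqConv_aux f x₀ y₀ hε hcX (fun n => (q n).2) hyt
  · -- SeqConvergesTo V y₀
    have hcY : ∀ yy : Y, yy ≠ y₀ →
        ContinuousAt (fun z : Y × X => f (z.2, z.1) - f ((z.1, x₀).2, (z.1, x₀).1)) (yy, x₀) := by
      intro yy hyy
      have h0 : ContinuousAt (f ∘ Prod.swap) (yy, x₀) :=
        ContinuousAt.comp (x := ((yy, x₀) : Y × X))
          (hcont (x₀, yy) (by simp [Prod.ext_iff, hyy])) continuous_swap.continuousAt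
      have h1 : ContinuousAt (fun z : Y × X => f (z.2, z.1)) (yy, x₀) := h0
      exact h1.sub (((hf.1 x₀).comp continuous_fst).continuousAt)
    exact seqConv_aux (fun z : Y × X => f (z.2, z.1)) y₀ x₀ hε hcY (fun n => (q n).1) hxt
  · intro n hx
    have h1 : ε < |f (x₀, (q n).2) - f (x₀, y₀)| := hx
    have h2 := hqy n
    rw [← hcdef] at h1
    linarith
  · intro n hy
    have h1 : ε < |f ((q n).1, y₀) - f (x₀, y₀)| := hy
    have h2 := hqx n
    rw [← hcdef] at h1
    linarith
end
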